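/- arXiv:1804.00564 — 11 statements merged into one kernel-verified Lean document; each statement's English description precedes it below -/
import Mathlib

section
/- Let F be a field, let s ≥ 2 and t ≥ 2 be integers, and let C be an invertible 2×2 matrix over F with entries C₀₀, C₀₁, C₁₀, C₁₁. Let A, B : (ZMod s) × (Fin t) × (Fin t → ZMod s) → F be functions satisfying the pairwise coupling relations: for all x ∈ ZMod s, y ∈ Fin t, z : Fin t → ZMod s, (i) if z(y) = x then A(x,y,z) = B(x,y,z), and (ii) if z(y) ≠ x then A(x,y,z) = C₀₀·B(x,y,z) + C₀₁·B(z(y),y,z(x,y)) and A(z(y),y,z(x,y)) = C₁₀·B(x,y,z) + C₁₁·B(z(y),y,z(x,y)), where z(x,y) denotes the vector obtained from z by replacing its y-th entry with x. Let P ⊆ (ZMod s) × (Fin t), and for y ∈ Fin t set P_y = { x : (x,y) ∈ P }. If A(x,y,z) = 0 for all (x,y) ∈ P and all z : Fin t → ZMod s, then B(x',y',z') = 0 for every x' ∈ ZMod s, y' ∈ Fin t, z' : Fin t → ZMod s such that x' ∈ P_{y'} and z'(y') ∈ P_{y'}. -/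
namespace Matrix

theorem eq_zero_of_isUnit_fin_two {R : Type*} [Semiring R]
    {C : Matrix (Fin 2) (Fin 2) R} (hC : IsUnit C) {a b : R}
    (hrow0 : C 0 0 * a + C 0 1 * b = 0) (hrow1 : C 1 0 * a + C 1 1 * b = 0) :
    a = 0 ∧ b = 0 := by
  have hker : C *ᵥ ![a, b] = C *ᵥ 0 := by
    rw [mulVec_fin_two, mulVec_zero]
    simp [hrow0, hrow1]
  simpa using mulVec_injective_of_isUnit hC hker

end Matrix

theorem pct_coupling_lemma_general
    (F : Type*) [Field F] (s t : ℕ)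
    (C : Matrix (Fin 2) (Fin 2) F) (hC : IsUnit C)
    (A B : ZMod s → Fin t → (Fin t → ZMod s) → F)
    (hdiag : ∀ (x : ZMod s) (y : Fin t) (z : Fin t → ZMod s),
      z y = x → A x y z = B x y z)
    (hcoup : ∀ (x : ZMod s) (y : Fin t) (z : Fin t → ZMod s), z y ≠ x →
      A x y z = C 0 0 * B x y z + C 0 1 * B (z y) y (Function.update z y x) ∧
      A (z y) y (Function.update z y x)
        = C 1 0 * B x y z + C 1 1 * B (z y) y (Function.update z y x))
    (P : Set (ZMod s × Fin t))
    (hA : ∀ p ∈ P, ∀ z : Fin t → ZMod s, A p.1 p.2 z = 0) :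
    ∀ (x' : ZMod s) (y' : Fin t) (z' : Fin t → ZMod s),
      (x', y') ∈ P → (z' y', y') ∈ P → B x' y' z' = 0 := by
  intro x y z hx hz
  by_cases hxz : z y = x
  · rw [← hdiag x y z hxz]
    exact hA _ hx z
  · -- Both symbols of the coupled pair lie in nodes of `P`, so `C` sends their `B`-values to zero.
    obtain ⟨hA0, hA1⟩ := hcoup x y z hxz
    exact (Matrix.eq_zero_of_isUnit_fin_two hC
      (hA0.symm.trans (hA _ hx z)) (hA1.symm.trans (hA _ hz _))).1

/-- Coupling lemma for the Pairwise Coupling Transform (PCT):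
if all coupled symbols `A` indexed by node pairs in `P` vanish (for every
intra-node position `z`), then the uncoupled symbols `B(x',y',z')` vanish
whenever both `x'` and `z'(y')` belong to `P_{y'}`. -/
theorem pct_coupling_lemma
    (F : Type*) [Field F] (s t : ℕ) (hs : 2 ≤ s) (ht : 2 ≤ t)
    (C : Matrix (Fin 2) (Fin 2) F) (hC : IsUnit C)
    (A B : ZMod s → Fin t → (Fin t → ZMod s) → F)
    (hdiag : ∀ (x : ZMod s) (y : Fin t) (z : Fin t → ZMod s),
      z y = x → A x y z = B x y z)
    (hcoup : ∀ (x : ZMod s) (y : Fin t) (z : Fin t → ZMod s), z y ≠ x →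
      A x y z = C 0 0 * B x y z + C 0 1 * B (z y) y (Function.update z y x) ∧
      A (z y) y (Function.update z y x)
        = C 1 0 * B x y z + C 1 1 * B (z y) y (Function.update z y x))
    (P : Set (ZMod s × Fin t))
    (hA : ∀ p ∈ P, ∀ z : Fin t → ZMod s, A p.1 p.2 z = 0) :
    ∀ (x' : ZMod s) (y' : Fin t) (z' : Fin t → ZMod s),
      (x', y') ∈ P → (z' y', y') ∈ P → B x' y' z' = 0 :=
  pct_coupling_lemma_general F s t C hC A B hdiag hcoup P hA
end

section
/- Let F be a field, let s ≥ 2 and t ≥ 2 be integers, and let C be an invertible 2×2 matrix over F. Let A, B : (ZMod s) × (Fin t) × (Fin t → ZMod s) → F satisfy the pairwise coupling relations: for all x, y, z, if z(y) = x then A(x,y,z) = B(x,y,z), and if z(y) ≠ x then A(x,y,z) = C₀₀·B(x,y,z) + C₀₁·B(z(y),y,z(x,y)) and A(z(y),y,z(x,y)) = C₁₀·B(x,y,z) + C₁₁·B(z(y),y,z(x,y)), where z(x,y) is z with its y-th entry replaced by x. Let P ⊆ (ZMod s) × (Fin t). If A(x,y,z) = 0 for all (x,y) ∈ P and all z : Fin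 t → ZMod s, then there exists z' : Fin t → ZMod s such that B(x,y,z') = 0 for all (x,y) ∈ P. -/
/-- Corollary of the coupling lemma for the Pairwise Coupling Transform (PCT):
if all coupled symbols `A` indexed by node pairs in `P` vanish (for every
intra-node position `z`), then there is a single layer `z'` in which all the
uncoupled symbols `B` indexed by node pairs in `P` vanish. -/
theorem pct_coupling_corollary
    (F : Type*) [Field F] (s t : ℕ) (hs : 2 ≤ s) (ht : 2 ≤ t)
    (C : Matrix (Fin 2) (Fin 2) F) (hC : IsUnit C)
    (A B : ZMod s → Fin t → (Fin t → ZMod s) → F)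
    (hdiag : ∀ (x : ZMod s) (y : Fin t) (z : Fin t → ZMod s),
      z y = x → A x y z = B x y z)
    (hcoup : ∀ (x : ZMod s) (y : Fin t) (z : Fin t → ZMod s), z y ≠ x →
      A x y z = C 0 0 * B x y z + C 0 1 * B (z y) y (Function.update z y x) ∧
      A (z y) y (Function.update z y x)
        = C 1 0 * B x y z + C 1 1 * B (z y) y (Function.update z y x))
    (P : Set (ZMod s × Fin t))
    (hA : ∀ p ∈ P, ∀ z : Fin t → ZMod s, A p.1 p.2 z = 0) :
    ∃ z' : Fin t → ZMod s, ∀ p ∈ P, B p.1 p.2 z' = 0 := by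
  classical
  have hA' : ∀ (x : ZMod s) (y : Fin t), (x, y) ∈ P → ∀ z, A x y z = 0 :=
    fun x y h z => hA (x, y) h z
  have hdet : C 0 0 * C 1 1 - C 0 1 * C 1 0 ≠ 0 := by
    have h := (Matrix.isUnit_iff_isUnit_det C).mp hC
    rw [Matrix.det_fin_two] at h
    exact h.ne_zero
  -- the basic pair of equations for a coupled pair with a vanishing A-symbol
  have pair : ∀ (x : ZMod s) (y : Fin t) (z : Fin t → ZMod s), (x, y) ∈ P → z y ≠ x →
      C 0 0 * B x y z + C 0 1 * B (z y) y (Function.update z y x) = 0 ∧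
      C 1 1 * B x y z + C 1 0 * B (z y) y (Function.update z y x) = 0 := by
    intro x y z hp hz
    have h1 := (hcoup x y z hz).1
    rw [hA' x y hp z] at h1
    have hw : Function.update z y x y = x := Function.update_self y x z
    have hz2 : Function.update z y x y ≠ z y := by
      rw [hw]; exact fun h => hz h.symm
    have h2 := (hcoup (z y) y (Function.update z y x) hz2).2
    rw [hw, Function.update_idem, Function.update_eq_self, hA' x y hp z] at h2
    exact ⟨h1.symm, by linear_combination -h2⟩
  by_cases hgood : C 0 1 = 0 ∨ C 0 1 * C 1 1 - C 0 0 * C 1 0 ≠ 0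
  · -- in this case B vanishes everywhere on P
    refine ⟨fun _ => 0, fun p hp => ?_⟩
    obtain ⟨x, y⟩ := p
    by_cases hz : (fun _ : Fin t => (0 : ZMod s)) y = x
    · rw [← hdiag x y _ hz]; exact hA' x y hp _
    · obtain ⟨e1, e2⟩ := pair x y (fun _ => 0) hp hz
      rcases hgood with h01 | he
      · have h00 : C 0 0 ≠ 0 := by
          intro h; exact hdet (by rw [h, h01]; ring)
        have h : C 0 0 * B x y (fun _ => 0) = 0 := by
          linear_combination e1 - B ((fun _ : Fin t => (0 : ZMod s)) y) y
            (Function.update (fun _ => 0) y x) * h01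
        exact (mul_eq_zero.mp h).resolve_left h00
      · have h : (C 0 1 * C 1 1 - C 0 0 * C 1 0) * B x y (fun _ => 0) = 0 := by
          linear_combination C 0 1 * e2 - C 1 0 * e1
        exact (mul_eq_zero.mp h).resolve_left he
  · push_neg at hgood
    obtain ⟨h01, he⟩ := hgood
    have hsq : C 0 0 * C 0 0 - C 0 1 * C 0 1 ≠ 0 := by
      intro h
      have hkey : C 0 1 * (C 0 0 * C 1 1 - C 0 1 * C 1 0)
          = (C 0 0 * C 0 0 - C 0 1 * C 0 1) * C 1 0 := by
        linear_combination C 0 0 * he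
      rw [h, zero_mul] at hkey
      rcases mul_eq_zero.mp hkey with h' | h'
      · exact h01 h'
      · exact hdet h'
    -- B x y z = 0 whenever (x,y) ∈ P and (z y, y) ∈ P
    have key2 : ∀ (x : ZMod s) (y : Fin t) (z : Fin t → ZMod s),
        (x, y) ∈ P → (z y, y) ∈ P → B x y z = 0 := by
      intro x y z hp hp2
      by_cases hz : z y = x
      · rw [← hdiag x y z hz]; exact hA' x y hp z
      · obtain ⟨e1, -⟩ := pair x y z hp hz
        have hz2 : Function.update z y x y ≠ z y := by
          rw [Function.update_self]; exact fun h => hz h.symm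
        obtain ⟨f1, -⟩ := pair (z y) y (Function.update z y x) hp2 hz2
        rw [Function.update_self, Function.update_idem, Function.update_eq_self] at f1
        have h : (C 0 0 * C 0 0 - C 0 1 * C 0 1) * B x y z = 0 := by
          linear_combination C 0 0 * e1 - C 0 1 * f1
        exact (mul_eq_zero.mp h).resolve_left hsq
    refine ⟨fun y => if h : ∃ x, (x, y) ∈ P then h.choose else 0, fun p hp => ?_⟩
    obtain ⟨x, y⟩ := p
    have hex : ∃ x, (x, y) ∈ P := ⟨x, hp⟩
    apply key2 x y _ hp
    simp only [dif_pos hex]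
    exact hex.choose_spec
end

section
/- Let F be a field and ν, n_ℓ, α, δ, d₀ positive integers. Let C be an F-submodule of (Fin ν × Fin n_ℓ) → (Fin α → F) (a vector code whose nodes are partitioned into ν groups of n_ℓ nodes each, each node storing α symbols), and define the node-weight of c ∈ C as the number of nodes w with c(w) ≠ 0. Suppose: (i) for every c ∈ C and every group i ∈ Fin ν, if c is nonzero at some node of group i, then c is nonzero at at least δ nodes of group i; (ii) there exists an F-submodule C₀ of (Fin ν × Fin n_ℓ) → F such that every nonzero c₀ ∈ C₀ has at least d₀ nonzero coordinates, and for every nonzero c ∈ C whose support (set of nodes where c is nonzero) is contained in a single group i, there exists a nonzero c₀ ∈ C₀ whose support is contained in group i and whose number of nonzero coordinates is at most the node-weight of c. If d₀ ≤ 2δ, then every nonzero codeword c ∈ C has node-weight at least d₀. -/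
/-- Minimum-distance of a vector code with local regeneration: if each local
group enforces node-weight at least `δ` on codewords touching it, and every
nonzero codeword supported in a single group projects to a nonzero codeword of
a scalar code `C₀` of minimum distance `d₀` (supported in the same group, with
no larger weight), and `d₀ ≤ 2·δ`, then every nonzero codeword of the vector
code has node-weight at least `d₀`. -/
theorem msr_locality_min_distance
    (F : Type*) [Field F] (ν nℓ α δ d₀ : ℕ)
    (hν : 0 < ν) (hnℓ : 0 < nℓ) (hα : 0 < α) (hδ : 0 < δ) (hd₀ : 0 < d₀)
    (C : Submodule F ((Fin ν × Fin nℓ) → (Fin α → F)))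
    (hloc : ∀ c ∈ C, ∀ i : Fin ν,
      (∃ w : Fin nℓ, c (i, w) ≠ 0) →
        δ ≤ {w : Fin nℓ | c (i, w) ≠ 0}.ncard)
    (hscalar : ∃ C₀ : Submodule F ((Fin ν × Fin nℓ) → F),
      (∀ c₀ ∈ C₀, c₀ ≠ 0 → d₀ ≤ {w : Fin ν × Fin nℓ | c₀ w ≠ 0}.ncard) ∧
      (∀ c ∈ C, c ≠ 0 → ∀ i : Fin ν,
        (∀ w : Fin ν × Fin nℓ, c w ≠ 0 → w.1 = i) →
          ∃ c₀ ∈ C₀, c₀ ≠ 0 ∧ (∀ w : Fin ν × Fin nℓ, c₀ w ≠ 0 → w.1 = i) ∧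
            {w : Fin ν × Fin nℓ | c₀ w ≠ 0}.ncard
              ≤ {w : Fin ν × Fin nℓ | c w ≠ 0}.ncard))
    (hdδ : d₀ ≤ 2 * δ) :
    ∀ c ∈ C, c ≠ 0 → d₀ ≤ {w : Fin ν × Fin nℓ | c w ≠ 0}.ncard := by
  obtain ⟨C₀, hC₀min, hC₀proj⟩ := hscalar
  intro c hc hc0
  -- support is nonempty
  have hne : ∃ w : Fin ν × Fin nℓ, c w ≠ 0 := by
    by_contra h
    push_neg at h
    exact hc0 (funext fun w => h w)
  obtain ⟨w₁, hw₁⟩ := hne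
  by_cases hone : ∀ w : Fin ν × Fin nℓ, c w ≠ 0 → w.1 = w₁.1
  · obtain ⟨c₀, hc₀mem, hc₀ne, _, hle⟩ := hC₀proj c hc hc0 w₁.1 hone
    exact le_trans (hC₀min c₀ hc₀mem hc₀ne) hle
  · push_neg at hone
    obtain ⟨w₂, hw₂, hne12⟩ := hone
    -- two distinct groups each contribute ≥ δ nodes
    set S : Fin ν → Set (Fin ν × Fin nℓ) :=
      fun i => (fun w => (i, w)) '' {w : Fin nℓ | c (i, w) ≠ 0} with hS
    have hScard : ∀ i, (S i).ncard = {w : Fin nℓ | c (i, w) ≠ 0}.ncard := by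
      intro i
      exact Set.ncard_image_of_injective _ (fun a b h => (Prod.mk.injEq _ _ _ _ ▸ h).2)
    have hSsub : ∀ i, S i ⊆ {w : Fin ν × Fin nℓ | c w ≠ 0} := by
      rintro i _ ⟨w, hw, rfl⟩
      exact hw
    have hSδ : ∀ i, (∃ w : Fin nℓ, c (i, w) ≠ 0) → δ ≤ (S i).ncard := by
      intro i hi
      rw [hScard]
      exact hloc c hc i hi
    have hdisj : Disjoint (S w₂.1) (S w₁.1) := by
      rw [Set.disjoint_left]
      rintro _ ⟨a, _, rfl⟩ ⟨b, _, hb⟩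
      exact hne12 (by simpa using congrArg Prod.fst hb.symm)
    have hfin : ({w : Fin ν × Fin nℓ | c w ≠ 0}).Finite := Set.toFinite _
    have hunion : S w₂.1 ∪ S w₁.1 ⊆ {w : Fin ν × Fin nℓ | c w ≠ 0} :=
      Set.union_subset (hSsub _) (hSsub _)
    have h1 : δ ≤ (S w₁.1).ncard := hSδ _ ⟨w₁.2, by simpa using hw₁⟩
    have h2 : δ ≤ (S w₂.1).ncard := hSδ _ ⟨w₂.2, by simpa using hw₂⟩
    have hcard : (S w₂.1 ∪ S w₁.1).ncard = (S w₂.1).ncard + (S w₁.1).ncard :=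
      Set.ncard_union_eq hdisj (Set.toFinite _) (Set.toFinite _)
    calc d₀ ≤ 2 * δ := hdδ
      _ = δ + δ := two_mul δ
      _ ≤ (S w₂.1).ncard + (S w₁.1).ncard := Nat.add_le_add h2 h1
      _ = (S w₂.1 ∪ S w₁.1).ncard := hcard.symm
      _ ≤ _ := Set.ncard_le_ncard hunion hfin
end

section
/- Let F be a field, let n = ν·n_ℓ with ν ≥ 1 and n_ℓ ≥ 1, and let γ ∈ F be a primitive n-th root of unity. Then for every i with 0 ≤ i ≤ ν−1 there exists a polynomial e⁽ⁱ⁾ ∈ F[X] of the form e⁽ⁱ⁾(X) = h_i(X^{n_ℓ}) for some h_i ∈ F[X] with deg h_i ≤ ν−1 (so deg e⁽ⁱ⁾ ≤ n_ℓ(ν−1)), such that e⁽ⁱ⁾ ≡ 1 modulo (X^{n_ℓ} − γ^{i·n_ℓ}) and e⁽ⁱ⁾ ≡ 0 modulo (X^{n_ℓ} − γ^{j·n_ℓ}) for every j ≠ i with 0 ≤ j ≤ ν−1. -/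
/-!
Since `γ^{n_ℓ}` is a primitive `ν`-th root of unity, the nodes `γ^{j·n_ℓ}`, `0 ≤ j < ν`, are
pairwise distinct, so `h_i` can be taken to be the Lagrange basis polynomial of degree `ν − 1`
that is `1` at `γ^{i·n_ℓ}` and `0` at the other nodes. A root `c` of `p` gives a factor `X − c`
of `p`, hence a factor `X^{n_ℓ} − c` of `p(X^{n_ℓ})`.
-/

open Polynomial Finset

theorem Polynomial.X_pow_sub_C_dvd_comp_X_pow {R : Type*} [CommRing R] {p : R[X]} {c : R}
    (n : ℕ) (hc : p.IsRoot c) : X ^ n - C c ∣ p.comp (X ^ n) := by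
  obtain ⟨q, hq⟩ := dvd_iff_isRoot.mpr hc
  exact ⟨q.comp (X ^ n), by rw [hq, mul_comp, sub_comp, X_comp, C_comp]⟩

theorem IsPrimitiveRoot.injOn_pow_mul_range {M : Type*} [CommMonoid M] {γ : M} {ν m : ℕ}
    (hγ : IsPrimitiveRoot γ (ν * m)) (hm : 0 < m) :
    Set.InjOn (fun j => γ ^ (j * m)) (range ν) := fun _ ha _ hb hab =>
  Nat.eq_of_mul_eq_mul_right hm <| hγ.pow_inj
    (Nat.mul_lt_mul_of_pos_right (mem_range.mp ha) hm)
    (Nat.mul_lt_mul_of_pos_right (mem_range.mp hb) hm) hab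

/-- The CRT idempotent-like polynomials `e⁽ⁱ⁾` of the Tamo-Barg construction:
for each coset index `i` there is a polynomial `e⁽ⁱ⁾(X) = h_i(X^{n_ℓ})`, with
`deg h_i ≤ ν−1` (so `deg e⁽ⁱ⁾ ≤ n_ℓ(ν−1)`), which is `≡ 1` modulo
`X^{n_ℓ} − γ^{i·n_ℓ}` and `≡ 0` modulo `X^{n_ℓ} − γ^{j·n_ℓ}` for every `j ≠ i`. -/
theorem crt_idempotent_polynomials
    (F : Type*) [Field F] (ν nℓ : ℕ) (hν : 1 ≤ ν) (hnℓ : 1 ≤ nℓ)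
    (γ : F) (hγ : IsPrimitiveRoot γ (ν * nℓ)) :
    ∀ i : ℕ, i ≤ ν - 1 →
      ∃ h : F[X], h.degree ≤ (ν - 1 : ℕ) ∧
        (X ^ nℓ - Polynomial.C (γ ^ (i * nℓ))) ∣ (h.comp (X ^ nℓ) - 1) ∧
        (∀ j : ℕ, j ≤ ν - 1 → j ≠ i →
          (X ^ nℓ - Polynomial.C (γ ^ (j * nℓ))) ∣ h.comp (X ^ nℓ)) := by
  intro i hi
  have hi : i ∈ range ν := mem_range.mpr (by omega)
  have hinj := hγ.injOn_pow_mul_range hnℓ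
  set e := Lagrange.basis (range ν) (fun j => γ ^ (j * nℓ)) i
  refine ⟨e, ?_, ?_, ?_⟩
  · rw [Lagrange.degree_basis hinj hi, card_range]
  · have hroot : (e - 1).IsRoot (γ ^ (i * nℓ)) := by
      simp [IsRoot, Lagrange.eval_basis_self hinj hi, e]
    simpa only [sub_comp, one_comp] using X_pow_sub_C_dvd_comp_X_pow nℓ hroot
  · intro j hj hji
    have hj : j ∈ range ν := mem_range.mpr (by omega)
    have hroot : e.IsRoot (γ ^ (j * nℓ)) :=
      Lagrange.eval_basis_of_ne (v := fun k => γ ^ (k * nℓ)) hji.symm hj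
    exact X_pow_sub_C_dvd_comp_X_pow nℓ hroot
end

section
/- Let F be a field, let n_ℓ ≥ 1 and 1 ≤ r ≤ n_ℓ be integers, let c ∈ F, and let M ∈ F[X] be a polynomial whose coefficient at X^t is zero for every index t whose residue t mod n_ℓ is at least r. Then the remainder of M upon division by (X^{n_ℓ} − c) has degree at most r−1; that is, the coefficient at X^t of M mod (X^{n_ℓ} − c) is zero for every t ≥ r. -/
open Polynomial

lemma X_pow_modByMonic_aux (F : Type*) [Field F] (nℓ : ℕ) (hnℓ : 1 ≤ nℓ) (c : F) (s : ℕ) :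
    (X ^ s : F[X]) %ₘ (X ^ nℓ - C c) = C (c ^ (s / nℓ)) * X ^ (s % nℓ) := by
  have hm : (X ^ nℓ - C c : F[X]).Monic := monic_X_pow_sub_C c (by omega)
  set d : F[X] := C (c ^ (s / nℓ)) * X ^ (s % nℓ) with hd
  have h2 : (X ^ s : F[X]) = (X ^ nℓ) ^ (s / nℓ) * X ^ (s % nℓ) := by
    rw [← pow_mul, ← pow_add, Nat.div_add_mod]
  have hdvd : (X ^ nℓ - C c : F[X]) ∣ X ^ s - d := by
    have h1 : (X ^ nℓ - C c : F[X]) ∣ (X ^ nℓ) ^ (s / nℓ) - (C c) ^ (s / nℓ) :=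
      sub_dvd_pow_sub_pow _ _ _
    have : (X ^ s : F[X]) - d = ((X ^ nℓ) ^ (s / nℓ) - (C c) ^ (s / nℓ)) * X ^ (s % nℓ) := by
      rw [h2, hd, sub_mul, C_pow]
    rw [this]
    exact h1.mul_right _
  have hz : (X ^ s - d) %ₘ (X ^ nℓ - C c) = 0 :=
    (modByMonic_eq_zero_iff_dvd hm).2 hdvd
  have hdeg : d.degree < (X ^ nℓ - C c : F[X]).degree := by
    rw [degree_X_pow_sub_C (by omega) c]
    exact lt_of_le_of_lt (degree_C_mul_X_pow_le _ _)
      (by exact_mod_cast Nat.cast_lt.2 (Nat.mod_lt s (by omega)))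
  have hds : d %ₘ (X ^ nℓ - C c) = d := (modByMonic_eq_self_iff hm).2 hdeg
  calc (X ^ s : F[X]) %ₘ (X ^ nℓ - C c) = ((X ^ s - d) + d) %ₘ (X ^ nℓ - C c) := by ring_nf
    _ = (X ^ s - d) %ₘ (X ^ nℓ - C c) + d %ₘ (X ^ nℓ - C c) := add_modByMonic _ _
    _ = d := by rw [hz, hds, zero_add]

/-- Locality property of the Tamo-Barg construction: if all coefficients of
`M` at monomial indices `t` with `t mod n_ℓ ≥ r` vanish, then the remainder of
`M` modulo `X^{n_ℓ} − c` has degree at most `r − 1`, i.e. its coefficient at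
`X^t` vanishes for every `t ≥ r`. -/
theorem tamo_barg_locality
    (F : Type*) [Field F] (nℓ r : ℕ) (hnℓ : 1 ≤ nℓ) (hr : 1 ≤ r)
    (hrn : r ≤ nℓ) (c : F) (M : F[X])
    (hM : ∀ t : ℕ, r ≤ t % nℓ → M.coeff t = 0) :
    ∀ t : ℕ, r ≤ t → (M %ₘ (X ^ nℓ - Polynomial.C c)).coeff t = 0 := by
  intro t ht
  conv_lhs => rw [M.as_sum_support_C_mul_X_pow]
  have hsum : (∑ s ∈ M.support, C (M.coeff s) * X ^ s) %ₘ (X ^ nℓ - C c)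
      = ∑ s ∈ M.support, (C (M.coeff s) * X ^ s) %ₘ (X ^ nℓ - C c) :=
    map_sum (modByMonicHom (X ^ nℓ - C c)) _ _
  rw [hsum, finset_sum_coeff]
  apply Finset.sum_eq_zero
  intro s hs
  by_cases hc : M.coeff s = 0
  · simp [hc]
  have hsr : s % nℓ < r := by
    by_contra h
    exact hc (hM s (by omega))
  have : C (M.coeff s) * X ^ s = M.coeff s • (X ^ s : F[X]) := by
    rw [smul_eq_C_mul]
  rw [this, smul_modByMonic, X_pow_modByMonic_aux F nℓ hnℓ c s, coeff_smul,
    coeff_C_mul, coeff_X_pow, if_neg (by omega)]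
  simp
end

section
/- Let F be a field, let n = ν·n_ℓ with ν ≥ 1 and n_ℓ ≥ 1, let γ ∈ F be a primitive n-th root of unity, let 1 ≤ r ≤ n_ℓ, and let k be an integer with r ≤ k ≤ rν. Write k = a·r + b with 0 ≤ a ≤ ν−1 and 1 ≤ b ≤ r, and let T_k = { z·n_ℓ + y : 0 ≤ z ≤ a−1, 0 ≤ y ≤ r−1 } ∪ { a·n_ℓ + y : 0 ≤ y ≤ b−1 }. Let V be the F-span of the monomials { X^t : t ∈ T_k } in F[X]. Then for every i with 0 ≤ i ≤ ν−1, the image of V under the map M ↦ M mod (X^{n_ℓ} − γ^{i·n_ℓ}) equals the space of all polynomials in F[X] of degree at most r−1. -/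
/-!
Modulo `X ^ n - C c` the monomial `X ^ (z * n + y)`, `y < n`, reduces to `c ^ z • X ^ y`. Every
exponent in `T_k` has residue `y < r` modulo `nℓ`, and every `y < r` occurs in `T_k` itself
(with `z = 0`; when `a = 0` the bound `r ≤ k` forces `b = r`). So the reduced monomials span
exactly the polynomials of degree `< r`.
-/

open Polynomial

namespace Polynomial

variable {R : Type*} [CommRing R] [Nontrivial R]

theorem X_pow_modByMonic_X_pow_sub_C {n : ℕ} (hn : n ≠ 0) (c : R) (t : ℕ) :
    X ^ t %ₘ (X ^ n - C c) = C (c ^ (t / n)) * X ^ (t % n) := by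
  have hmonic : (X ^ n - C c).Monic := monic_X_pow_sub_C c hn
  have hdvd : X ^ n - C c ∣ X ^ t - C (c ^ (t / n)) * X ^ (t % n) := by
    have hsplit : (X : R[X]) ^ t - C (c ^ (t / n)) * X ^ (t % n)
        = ((X ^ n) ^ (t / n) - C c ^ (t / n)) * X ^ (t % n) := by
      rw [← pow_mul, C_pow, sub_mul, ← pow_add, Nat.div_add_mod]
    rw [hsplit]
    exact (sub_dvd_pow_sub_pow _ _ _).mul_right _
  rw [modByMonic_eq_of_dvd_sub hmonic hdvd, modByMonic_eq_self_iff hmonic,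
    degree_X_pow_sub_C (Nat.pos_of_ne_zero hn)]
  exact (degree_C_mul_X_pow_le _ _).trans_lt (WithBot.coe_lt_coe.2 (Nat.mod_lt t
    (Nat.pos_of_ne_zero hn)))

theorem map_modByMonicHom_span_X_pow {n r : ℕ} (hn : n ≠ 0) (hrn : r ≤ n) (c : R) {T : Set ℕ}
    (hT : ∀ t ∈ T, t % n < r) (hrT : ∀ y < r, y ∈ T) :
    (Submodule.span R ((fun t => (X : R[X]) ^ t) '' T)).map (modByMonicHom (X ^ n - C c))
      = degreeLT R r := by
  classical
  rw [Submodule.map_span, degreeLT_eq_span_X_pow]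
  apply le_antisymm
  · rw [Submodule.span_le]
    rintro _ ⟨_, ⟨t, ht, rfl⟩, rfl⟩
    change X ^ t %ₘ (X ^ n - C c) ∈ _
    rw [X_pow_modByMonic_X_pow_sub_C hn, ← smul_eq_C_mul]
    exact Submodule.smul_mem _ _ (Submodule.subset_span
      (Finset.mem_image_of_mem _ (Finset.mem_range.2 (hT t ht))))
  · rw [Submodule.span_le]
    intro _ hmem
    obtain ⟨y, hy, rfl⟩ := Finset.mem_image.1 hmem
    have hyr : y < r := Finset.mem_range.1 hy
    have hyn : y < n := hyr.trans_le hrn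
    refine Submodule.subset_span ⟨X ^ y, ⟨y, hrT y hyr, rfl⟩, ?_⟩
    change X ^ y %ₘ (X ^ n - C c) = X ^ y
    rw [X_pow_modByMonic_X_pow_sub_C hn, Nat.div_eq_of_lt hyn, Nat.mod_eq_of_lt hyn, pow_zero,
      C_1, one_mul]

end Polynomial

theorem tamo_barg_local_code_is_mds_general
    (F : Type*) [Field F] (ν nℓ r k a b : ℕ)
    (hnℓ : 1 ≤ nℓ) (hrn : r ≤ nℓ)
    (γ : F)
    (hrk : r ≤ k)
    (hk : k = a * r + b) (hbr : b ≤ r) :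
    ∀ i : ℕ, i ≤ ν - 1 →
      (fun M : F[X] => M %ₘ (X ^ nℓ - Polynomial.C (γ ^ (i * nℓ)))) ''
        (Submodule.span F
          ((fun t : ℕ => (X : F[X]) ^ t) ''
            ({t | ∃ z < a, ∃ y < r, t = z * nℓ + y} ∪
             {t | ∃ y < b, t = a * nℓ + y})) : Set F[X])
      = {p : F[X] | p.degree < (r : ℕ)} := by
  intro i _
  set T : Set ℕ := {t | ∃ z < a, ∃ y < r, t = z * nℓ + y} ∪ {t | ∃ y < b, t = a * nℓ + y}
  have hT : ∀ t ∈ T, t % nℓ < r := by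
    rintro _ (⟨z, -, y, hy, rfl⟩ | ⟨y, hy, rfl⟩) <;>
      rw [Nat.mul_add_mod_of_lt (by omega)] <;> omega
  have hrT : ∀ y < r, y ∈ T := by
    intro y hy
    rcases Nat.eq_zero_or_pos a with rfl | ha
    · exact Or.inr ⟨y, by omega, by simp⟩
    · exact Or.inl ⟨0, ha, y, hy, by simp⟩
  have hmap := map_modByMonicHom_span_X_pow (by omega) hrn (γ ^ (i * nℓ)) hT hrT
  ext p
  simpa [mem_degreeLT] using SetLike.ext_iff.1 hmap p

/-- Each local code of the Tamo-Barg code, i.e. the set of reductions modulo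
the coset annihilator `f⁽ⁱ⁾(X) = X^{n_ℓ} − γ^{i·n_ℓ}` of the message space
spanned by the monomials `{X^t : t ∈ T_k}`, is exactly the space of all
polynomials of degree at most `r − 1` (an `[n_ℓ, r]` MDS code). -/
theorem tamo_barg_local_code_is_mds
    (F : Type*) [Field F] (ν nℓ r k a b : ℕ)
    (hν : 1 ≤ ν) (hnℓ : 1 ≤ nℓ) (hr : 1 ≤ r) (hrn : r ≤ nℓ)
    (γ : F) (hγ : IsPrimitiveRoot γ (ν * nℓ))
    (hrk : r ≤ k) (hkr : k ≤ r * ν)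
    (hk : k = a * r + b) (ha : a ≤ ν - 1) (hb1 : 1 ≤ b) (hbr : b ≤ r) :
    ∀ i : ℕ, i ≤ ν - 1 →
      (fun M : F[X] => M %ₘ (X ^ nℓ - Polynomial.C (γ ^ (i * nℓ)))) ''
        (Submodule.span F
          ((fun t : ℕ => (X : F[X]) ^ t) ''
            ({t | ∃ z < a, ∃ y < r, t = z * nℓ + y} ∪
             {t | ∃ y < b, t = a * nℓ + y})) : Set F[X])
      = {p : F[X] | p.degree < (r : ℕ)} :=
  tamo_barg_local_code_is_mds_general F ν nℓ r k a b hnℓ hrn γ hrk hk hbr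
end

section
/- Let F be a field, let n = ν·n_ℓ with ν ≥ 1 and n_ℓ ≥ 2, let γ ∈ F be a primitive n-th root of unity, let 1 ≤ r ≤ n_ℓ − 1 and δ = n_ℓ − r + 1, and let k be an integer with 1 ≤ k ≤ rν. Write k = a·r + b with 0 ≤ a ≤ ν−1 and 1 ≤ b ≤ r, and let T_k = { z·n_ℓ + y : 0 ≤ z ≤ a−1, 0 ≤ y ≤ r−1 } ∪ { a·n_ℓ + y : 0 ≤ y ≤ b−1 }. Then for every nonzero polynomial M in the F-span of the monomials { X^t : t ∈ T_k }, the number of indices u ∈ {0, 1, …, n−1} with M(γ^u) ≠ 0 is at least n − k + 1 − a·(δ − 1), which equals n − (a·n_ℓ + b) + 1. -/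
/-!
Every exponent in `T_k` is below `a·n_ℓ + b` (the blocks `z·n_ℓ + [0, r)` with `z < a` end before
`a·n_ℓ` because `r ≤ n_ℓ`), so `M` has degree `< a·n_ℓ + b`. A nonzero polynomial has at most
`deg M` roots, and the `n` points `γ^u` are pairwise distinct, so at most `a·n_ℓ + b − 1` of them
are zeros of `M`. The identity between the two forms of the bound is `a·(δ − 1) + a·r = a·n_ℓ`.
-/

open Polynomial Finset

theorem Polynomial.span_X_pow_le_degreeLT {R : Type*} [CommRing R] {S : Set ℕ} {N : ℕ}
    (hS : ∀ t ∈ S, t < N) : Submodule.span R ((X ^ ·) '' S) ≤ degreeLT R N := by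
  refine Submodule.span_le.mpr ?_
  rintro _ ⟨t, ht, rfl⟩
  exact mem_degreeLT.mpr <| (degree_X_pow_le t).trans_lt (by exact_mod_cast hS t ht)

theorem IsPrimitiveRoot.card_filter_eval_pow_eq_zero_le {R : Type*} [CommRing R] [IsDomain R]
    [DecidableEq R] {γ : R} {n : ℕ} (hγ : IsPrimitiveRoot γ n) {p : R[X]} (hp : p ≠ 0) :
    #{u ∈ range n | p.eval (γ ^ u) = 0} ≤ p.natDegree := by
  have hinj : Set.InjOn (γ ^ ·) (range n : Set ℕ) := fun u hu v hv =>
    hγ.pow_inj (mem_range.mp hu) (mem_range.mp hv)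
  rw [← card_image_of_injOn (hinj.mono (coe_subset.mpr (filter_subset _ _)))]
  refine card_le_degree_of_subset_roots fun x hx => ?_
  obtain ⟨u, hu, rfl⟩ := mem_image.mp (mem_def.mpr hx)
  exact (mem_roots hp).mpr (mem_filter.mp hu).2

theorem IsPrimitiveRoot.sub_natDegree_le_ncard_eval_pow_ne_zero {R : Type*} [CommRing R]
    [IsDomain R] {γ : R} {n : ℕ} (hγ : IsPrimitiveRoot γ n) {p : R[X]} (hp : p ≠ 0) :
    n - p.natDegree ≤ {u : ℕ | u < n ∧ p.eval (γ ^ u) ≠ 0}.ncard := by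
  classical
  have hset : {u : ℕ | u < n ∧ p.eval (γ ^ u) ≠ 0} = ↑{u ∈ range n | ¬p.eval (γ ^ u) = 0} := by
    ext u; simp
  have hsplit := card_filter_add_card_filter_not (s := range n) (fun u => p.eval (γ ^ u) = 0)
  rw [card_range] at hsplit
  rw [hset, Set.ncard_coe_finset]
  have hzeros := hγ.card_filter_eval_pow_eq_zero_le hp
  omega

theorem tamoBarg_exponent_lt {nℓ r a b t : ℕ} (hr : r ≤ nℓ)
    (ht : t ∈ {t | ∃ z < a, ∃ y < r, t = z * nℓ + y} ∪ {t | ∃ y < b, t = a * nℓ + y}) :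
    t < a * nℓ + b := by
  rcases ht with ⟨z, hz, y, hy, rfl⟩ | ⟨y, hy, rfl⟩
  · have hblock : (z + 1) * nℓ ≤ a * nℓ := Nat.mul_le_mul_right _ hz
    nlinarith
  · omega

theorem tamo_barg_min_distance_general
    (F : Type*) [Field F] (ν nℓ r δ k a b : ℕ)
    (hν : 1 ≤ ν) (hrn : r ≤ nℓ - 1)
    (hδ : δ = nℓ - r + 1)
    (γ : F) (hγ : IsPrimitiveRoot γ (ν * nℓ))
    (hk : k = a * r + b) (ha : a ≤ ν - 1) (hbr : b ≤ r) :
    (ν * nℓ - k + 1 - a * (δ - 1) = ν * nℓ - (a * nℓ + b) + 1) ∧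
    ∀ M : F[X],
      M ∈ Submodule.span F
        ((fun t : ℕ => (X : F[X]) ^ t) ''
          ({t | ∃ z < a, ∃ y < r, t = z * nℓ + y} ∪
           {t | ∃ y < b, t = a * nℓ + y})) →
      M ≠ 0 →
      ν * nℓ - k + 1 - a * (δ - 1)
        ≤ {u : ℕ | u < ν * nℓ ∧ M.eval (γ ^ u) ≠ 0}.ncard := by
  have hνa : a * nℓ + nℓ ≤ ν * nℓ := by
    rw [← Nat.succ_mul]; exact Nat.mul_le_mul_right _ (by omega)
  have hident : ν * nℓ - k + 1 - a * (δ - 1) = ν * nℓ - (a * nℓ + b) + 1 := by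
    have hδa : a * (δ - 1) + a * r = a * nℓ := by
      rw [← Nat.mul_add]; congr 1; omega
    omega
  refine ⟨hident, fun M hM hM0 => ?_⟩
  have hdeg : M.natDegree < a * nℓ + b :=
    (natDegree_lt_iff_degree_lt hM0).mpr <| mem_degreeLT.mp <|
      span_X_pow_le_degreeLT (fun t ht => tamoBarg_exponent_lt (by omega) ht) hM
  have hcount := hγ.sub_natDegree_le_ncard_eval_pow_ne_zero hM0
  omega

/-- Minimum-distance optimality of the Tamo-Barg code: every nonzero
polynomial in the span of the monomials `{X^t : t ∈ T_k}` is nonzero at at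
least `n − k + 1 − a·(δ − 1) = n − (a·n_ℓ + b) + 1` of the `n` evaluation
points `1, γ, …, γ^{n−1}`. -/
theorem tamo_barg_min_distance
    (F : Type*) [Field F] (ν nℓ r δ k a b : ℕ)
    (hν : 1 ≤ ν) (hnℓ : 2 ≤ nℓ) (hr : 1 ≤ r) (hrn : r ≤ nℓ - 1)
    (hδ : δ = nℓ - r + 1)
    (γ : F) (hγ : IsPrimitiveRoot γ (ν * nℓ))
    (hk1 : 1 ≤ k) (hkr : k ≤ r * ν)
    (hk : k = a * r + b) (ha : a ≤ ν - 1) (hb1 : 1 ≤ b) (hbr : b ≤ r) :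
    (ν * nℓ - k + 1 - a * (δ - 1) = ν * nℓ - (a * nℓ + b) + 1) ∧
    ∀ M : F[X],
      M ∈ Submodule.span F
        ((fun t : ℕ => (X : F[X]) ^ t) ''
          ({t | ∃ z < a, ∃ y < r, t = z * nℓ + y} ∪
           {t | ∃ y < b, t = a * nℓ + y})) →
      M ≠ 0 →
      ν * nℓ - k + 1 - a * (δ - 1)
        ≤ {u : ℕ | u < ν * nℓ ∧ M.eval (γ ^ u) ≠ 0}.ncard :=
  tamo_barg_min_distance_general F ν nℓ r δ k a b hν hrn hδ γ hγ hk ha hbr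
end

section
/- Let F be a field, let n = ν·n_ℓ with ν ≥ 1 and n_ℓ ≥ 2, let γ ∈ F be a primitive n-th root of unity, and let integers r, d, a, p satisfy 1 ≤ p ≤ r ≤ d ≤ n_ℓ − 1 and 0 ≤ a ≤ ν − 1. For i ∈ {0, …, ν−1} let f_i(X) = X^{n_ℓ} − γ^{i·n_ℓ}. Let (M₀, M₁, …, M_{d−1}) be a tuple of polynomials in F[X], each of degree less than n, and for each i and each j ∈ {0,…,d−1} let m_{i,j} = M_j mod f_i. Suppose: (C1) for all i, j, the coefficient of X^t in m_{i,j} is zero for all t ≥ d; (C2) for all i and all t, j ∈ {0,…,d−1}, the coefficient of X^t in m_{i,j} equals the coefficient of X^j in m_{i,t}; (C3) for all i and all t, j with r ≤ t ≤ d−1 and r ≤ j ≤ d−1, the coefficient of X^t in m_{i,j} is zero; (C4) deg M_j ≤ a·n_ℓ + d − 1 for 0 ≤ j ≤ p−1, and deg M_j ≤ a·n_ℓ + p − 1 for p ≤ j ≤ d−1. If not all of M₀, …, M_{d−1} are zero, then the number of indices u ∈ {0, 1, …, n−1} such that M_j(γ^u) ≠ 0 for some j ∈ {0,…,d−1} is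 at least n − (a·n_ℓ + p) + 1. -/
/-!
Let `Z` be the set of nodes at which every `M j` vanishes; it suffices to show that
`#Z ≥ a·nℓ + p` forces `M = 0`. Since `γ ^ (u·nℓ) = γ ^ ((u % ν)·nℓ)`, the point `γ ^ u` is a root
of `fᵢ = X ^ nℓ - γ ^ (i·nℓ)` for `i = u % ν`; the `nℓ` nodes of this residue class form the
group `Gᵢ`, on which `M j` and `mᵢⱼ = M j mod fᵢ` agree.

If `#Z ≥ a·nℓ + d`, every `M j` has more zeros than its degree. Otherwise the caps (C4) still kill
the columns `j ≥ p`, and then the symmetry (C2) kills every coefficient of index `≥ p` of every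
`mᵢⱼ`. So a group meeting `Z` in at least `p` nodes has all `mᵢⱼ = 0` and lies entirely in `Z`;
since `#Z < (a + 1)·nℓ`, at most `a` groups do, which leaves at least `p` nodes of `Z` in sparse
groups. For such a node `u ∈ Gᵢ`, symmetry turns `∑ⱼ γ^(u j) mᵢⱼ` into `∑ₜ Xᵗ mᵢₜ(γ ^ u) = 0`,
so `fᵢ` divides `Nᵤ = ∑ⱼ γ^(u j) M j`. Then `Nᵤ` vanishes on `Z ∪ Gᵢ`, which has more than
`(a + 1)·nℓ > deg Nᵤ` nodes, so `Nᵤ = 0`. Read coefficientwise, these `p` relations at distinct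
points `γ ^ u` form a Vandermonde system for the `M j` with `j < p`, which therefore vanish.
-/

open Polynomial Finset

namespace IsPrimitiveRoot

variable {F : Type*} [Field F] {γ : F}

theorem eq_zero_of_degree_lt_card {n : ℕ} (hγ : IsPrimitiveRoot γ n) {q : F[X]}
    {T : Finset ℕ} (hT : T ⊆ range n) (hq : ∀ u ∈ T, q.eval (γ ^ u) = 0)
    (hlt : q.degree < #T) : q = 0 :=
  eq_zero_of_degree_lt_of_eval_index_eq_zero T (hγ.injOn_pow.mono (coe_subset.2 hT)) hlt hq

theorem isRoot_X_pow_sub_C_pow_mod {ν nℓ : ℕ} (hγ : IsPrimitiveRoot γ (ν * nℓ)) (u : ℕ) :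
    (X ^ nℓ - C (γ ^ (u % ν * nℓ))).IsRoot (γ ^ u) := by
  have h : γ ^ (u * nℓ) = γ ^ (u % ν * nℓ) := by
    calc γ ^ (u * nℓ) = γ ^ (u % ν * nℓ + ν * nℓ * (u / ν)) := by
          nth_rewrite 1 [← Nat.mod_add_div u ν]; ring_nf
      _ = γ ^ (u % ν * nℓ) := by rw [pow_add, pow_mul γ (ν * nℓ), hγ.pow_eq_one, one_pow, mul_one]
  simp [← pow_mul, h]

end IsPrimitiveRoot

theorem card_filter_range_mul_mod_eq {ν nℓ i : ℕ} (hi : i < ν) :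
    #{u ∈ range (ν * nℓ) | u % ν = i} = nℓ := by
  have hν : 0 < ν := (Nat.zero_le i).trans_lt hi
  have h := Nat.count_modEq_card (ν * nℓ) hν i
  rw [Nat.count_eq_card_filter_range, Nat.mul_mod_right, Nat.mul_div_cancel_left _ hν] at h
  simpa [Nat.ModEq, Nat.mod_eq_of_lt hi] using h

theorem card_filter_range_mul_mod_mem {ν nℓ : ℕ} {S : Finset ℕ} (hS : S ⊆ range ν) :
    #{u ∈ range (ν * nℓ) | u % ν ∈ S} = #S * nℓ := by
  rw [card_eq_sum_card_fiberwise (s := {u ∈ range (ν * nℓ) | u % ν ∈ S}) (f := (· % ν))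
    (t := S) fun u hu => (mem_filter.1 hu).2, sum_const_nat (m := nℓ) fun i hi => ?_]
  rw [filter_filter]
  convert card_filter_range_mul_mod_eq (nℓ := nℓ) (mem_range.1 (hS hi)) using 3
  grind

theorem le_card_filter_card_filter_mod_lt {ν nℓ a p : ℕ} {Z : Finset ℕ}
    (hZ : Z ⊆ range (ν * nℓ))
    (hfull : ∀ i < ν, p ≤ #{w ∈ Z | w % ν = i} → {w ∈ range (ν * nℓ) | w % ν = i} ⊆ Z)
    (hle : a * nℓ + p ≤ #Z) (hlt : #Z < (a + 1) * nℓ) :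
    p ≤ #{u ∈ Z | #{w ∈ Z | w % ν = u % ν} < p} := by
  set S := {i ∈ range ν | p ≤ #{w ∈ Z | w % ν = i}}
  have hdense :
      {u ∈ Z | ¬#{w ∈ Z | w % ν = u % ν} < p} = {u ∈ range (ν * nℓ) | u % ν ∈ S} := by
    ext u
    simp only [mem_filter, S, mem_range, not_lt]
    constructor
    · rintro ⟨hu, hp⟩
      have hu' := mem_range.1 (hZ hu)
      exact ⟨hu', Nat.mod_lt _ (Nat.pos_of_ne_zero fun h => by simp [h] at hu'), hp⟩
    · rintro ⟨hu, hi, hp⟩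
      exact ⟨hfull _ hi hp (mem_filter.2 ⟨mem_range.2 hu, rfl⟩), hp⟩
  have hS : #S * nℓ ≤ #Z := by
    rw [← card_filter_range_mul_mod_mem (filter_subset _ _), ← hdense]
    exact card_filter_le _ _
  have hSa : #S * nℓ ≤ a * nℓ :=
    Nat.mul_le_mul_right _ (Nat.le_of_lt_succ (Nat.lt_of_mul_lt_mul_right (hS.trans_lt hlt)))
  have hsplit : #{u ∈ Z | #{w ∈ Z | w % ν = u % ν} < p} + #S * nℓ = #Z := by
    rw [← card_filter_range_mul_mod_mem (filter_subset _ _), ← hdense]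
    exact card_filter_add_card_filter_not _
  omega

section

variable {F : Type*} [Field F]

namespace Polynomial

theorem eval_modByMonic_eq_self_of_root {p q : F[X]} {x : F} (hx : q.IsRoot x) :
    (p %ₘ q).eval x = p.eval x :=
  eval₂_modByMonic_eq_self_of_root hx

end Polynomial

theorem eq_zero_of_sum_mul_pow_eq_zero {d p : ℕ} {c : Fin d → F}
    (hc : ∀ j : Fin d, p ≤ j → c j = 0)
    {ι : Type*} {v : ι → F} {s : Finset ι} (hv : Set.InjOn v s) (hs : p ≤ #s)
    (h : ∀ i ∈ s, ∑ j : Fin d, c j * v i ^ (j : ℕ) = 0) : c = 0 := by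
  set q : F[X] := ∑ j, C (c j) * X ^ (j : ℕ)
  have hcoeff : ∀ j : Fin d, q.coeff j = c j := fun j => by simp [q, Fin.val_inj]
  have hdeg : q.degree < p := by
    refine (degree_lt_iff_coeff_zero _ _).2 fun k hk => ?_
    simp only [q, finsetSum_coeff, coeff_C_mul_X_pow]
    exact sum_eq_zero fun j _ => by split_ifs with hkj <;> [exact hc j (hkj ▸ hk); rfl]
  have hq : q = 0 := eq_zero_of_degree_lt_of_eval_index_eq_zero s hv
    (hdeg.trans_le (by exact_mod_cast hs)) fun i hi => by simpa [q, eval_finsetSum] using h i hi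
  funext j
  rw [← hcoeff, hq, coeff_zero, Pi.zero_apply]

/-- `m` lists the columns of a symmetric `d × d` matrix whose `(t, j)` entry is `(m j).coeff t`. -/
structure IsSymmetricColumns {d : ℕ} (m : Fin d → F[X]) : Prop where
  coeff_eq_zero : ∀ j t, d ≤ t → (m j).coeff t = 0
  coeff_symm : ∀ t j : Fin d, (m j).coeff t = (m t).coeff j

namespace IsSymmetricColumns

variable {d : ℕ} {m : Fin d → F[X]}

theorem coeff_sum_pow_smul (hm : IsSymmetricColumns m) (x : F) (t : Fin d) :
    (∑ j : Fin d, x ^ (j : ℕ) • m j).coeff t = (m t).eval x := by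
  have hlt : (m t).natDegree < d := by
    have := natDegree_le_iff_coeff_eq_zero.2 fun N (hN : d - 1 < N) =>
      hm.coeff_eq_zero t N (by omega)
    have := t.isLt
    omega
  simp only [finsetSum_coeff, coeff_smul, smul_eq_mul, hm.coeff_symm t, eval_eq_sum_range' hlt]
  exact (Fin.sum_univ_eq_sum_range (fun k => x ^ k * (m t).coeff k) d).trans
    (sum_congr rfl fun k _ => mul_comm _ _)

theorem sum_pow_smul_eq_zero (hm : IsSymmetricColumns m) {x : F} (hx : ∀ t, (m t).eval x = 0) :
    ∑ j : Fin d, x ^ (j : ℕ) • m j = 0 := by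
  ext t
  rw [coeff_zero]
  by_cases ht : t < d
  · exact (hm.coeff_sum_pow_smul x ⟨t, ht⟩).trans (hx _)
  · simp [hm.coeff_eq_zero _ t (not_lt.1 ht)]

theorem coeff_eq_zero_of_le {p : ℕ} (hm : IsSymmetricColumns m)
    (hhigh : ∀ j : Fin d, p ≤ j → m j = 0) (j : Fin d) {t : ℕ} (ht : p ≤ t) :
    (m j).coeff t = 0 := by
  by_cases htd : t < d
  · rw [show t = (⟨t, htd⟩ : Fin d) from rfl, hm.coeff_symm, hhigh _ ht, coeff_zero]
  · exact hm.coeff_eq_zero j t (not_lt.1 htd)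

end IsSymmetricColumns

theorem modByMonic_sum_pow_smul_eq_zero {d : ℕ} {M : Fin d → F[X]} {f : F[X]}
    (hM : IsSymmetricColumns fun j => M j %ₘ f) {x : F} (hfx : f.IsRoot x)
    (hx : ∀ j, (M j).eval x = 0) : (∑ j : Fin d, x ^ (j : ℕ) • M j) %ₘ f = 0 := by
  have := hM.sum_pow_smul_eq_zero fun t => (eval_modByMonic_eq_self_of_root hfx).trans (hx t)
  simpa only [← modByMonicHom_apply, map_sum, map_smul] using this

open Classical in
noncomputable def commonZeroNodes {d : ℕ} (γ : F) (n : ℕ) (M : Fin d → F[X]) : Finset ℕ :=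
  {u ∈ range n | ∀ j, (M j).eval (γ ^ u) = 0}

section

variable {d n : ℕ} {γ : F} {M : Fin d → F[X]}

theorem mem_commonZeroNodes {u : ℕ} :
    u ∈ commonZeroNodes γ n M ↔ u < n ∧ ∀ j, (M j).eval (γ ^ u) = 0 := by
  simp [commonZeroNodes]

theorem commonZeroNodes_subset_range : commonZeroNodes γ n M ⊆ range n :=
  fun _ hu => mem_range.2 (mem_commonZeroNodes.1 hu).1

theorem ncard_setOf_exists_eval_ne_zero :
    {u : ℕ | u < n ∧ ∃ j : Fin d, (M j).eval (γ ^ u) ≠ 0}.ncard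
      = n - #(commonZeroNodes γ n M) := by
  have : {u : ℕ | u < n ∧ ∃ j : Fin d, (M j).eval (γ ^ u) ≠ 0}
      = ↑(range n \ commonZeroNodes γ n M) := by
    ext u
    simp only [Set.mem_ofPred_eq, coe_sdiff, coe_range, Set.mem_sdiff, Set.mem_Iio, mem_coe,
      mem_commonZeroNodes, not_and, not_forall]
    tauto
  rw [this, Set.ncard_coe_finset, card_sdiff_of_subset commonZeroNodes_subset_range, card_range]

end

section

variable {ν nℓ d p : ℕ} {γ : F} {M : Fin d → F[X]}

theorem subset_commonZeroNodes_of_le_card {i : ℕ} (hγ : IsPrimitiveRoot γ (ν * nℓ))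
    (hsym : IsSymmetricColumns fun j => M j %ₘ (X ^ nℓ - C (γ ^ (i * nℓ))))
    (hhigh : ∀ j : Fin d, p ≤ j → M j = 0)
    (hi : p ≤ #{w ∈ commonZeroNodes γ (ν * nℓ) M | w % ν = i}) :
    {w ∈ range (ν * nℓ) | w % ν = i} ⊆ commonZeroNodes γ (ν * nℓ) M := by
  have hroot : ∀ w, w % ν = i → (X ^ nℓ - C (γ ^ (i * nℓ))).IsRoot (γ ^ w) := fun w hw =>
    hw ▸ hγ.isRoot_X_pow_sub_C_pow_mod w
  have hdeg_mod : ∀ j, (M j %ₘ (X ^ nℓ - C (γ ^ (i * nℓ)))).degree < p := fun j =>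
    (degree_lt_iff_coeff_zero _ _).2 fun t ht =>
      hsym.coeff_eq_zero_of_le (fun j hj => by rw [hhigh j hj, zero_modByMonic]) j ht
  have hmod : ∀ j, M j %ₘ (X ^ nℓ - C (γ ^ (i * nℓ))) = 0 := fun j => by
    refine hγ.eq_zero_of_degree_lt_card ((filter_subset _ _).trans commonZeroNodes_subset_range)
      (fun w hw => ?_) ((hdeg_mod j).trans_le (by exact_mod_cast hi))
    obtain ⟨hwZ, hwi⟩ := mem_filter.1 hw
    rw [eval_modByMonic_eq_self_of_root (hroot w hwi)]
    exact (mem_commonZeroNodes.1 hwZ).2 j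
  intro w hw
  obtain ⟨hwn, hwi⟩ := mem_filter.1 hw
  refine mem_commonZeroNodes.2 ⟨mem_range.1 hwn, fun j => ?_⟩
  rw [← eval_modByMonic_eq_self_of_root (hroot w hwi), hmod, eval_zero]

theorem sum_pow_smul_eq_zero_of_card_lt {a : ℕ} (hγ : IsPrimitiveRoot γ (ν * nℓ))
    (hdn : d ≤ nℓ)
    (hsym : ∀ i < ν, IsSymmetricColumns fun j => M j %ₘ (X ^ nℓ - C (γ ^ (i * nℓ))))
    (hdeg : ∀ j, (M j).degree < ↑(a * nℓ + d))
    (hZ : a * nℓ + p ≤ #(commonZeroNodes γ (ν * nℓ) M)) {u : ℕ}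
    (hu : u ∈ commonZeroNodes γ (ν * nℓ) M)
    (hsmall : #{w ∈ commonZeroNodes γ (ν * nℓ) M | w % ν = u % ν} < p) :
    ∑ j : Fin d, (γ ^ u) ^ (j : ℕ) • M j = 0 := by
  set Z := commonZeroNodes γ (ν * nℓ) M
  set G := {w ∈ range (ν * nℓ) | w % ν = u % ν}
  obtain ⟨hun, hvan⟩ := mem_commonZeroNodes.1 hu
  have hum : u % ν < ν := Nat.mod_lt _ (Nat.pos_of_ne_zero fun h => by simp [h] at hun)
  have hmod :=
    modByMonic_sum_pow_smul_eq_zero (hsym _ hum) (hγ.isRoot_X_pow_sub_C_pow_mod u) hvan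
  have hcard : #(Z ∪ G) + #{w ∈ Z | w % ν = u % ν} = #Z + nℓ := by
    have := card_union_add_card_inter Z G
    rwa [card_filter_range_mul_mod_eq hum, inter_filter,
      inter_eq_left.2 commonZeroNodes_subset_range] at this
  refine hγ.eq_zero_of_degree_lt_card (T := Z ∪ G)
    (union_subset commonZeroNodes_subset_range (filter_subset _ _)) (fun w hw => ?_) ?_
  · rcases mem_union.1 hw with hw | hw
    · simp [eval_finsetSum, (mem_commonZeroNodes.1 hw).2]
    · rw [← eval_modByMonic_eq_self_of_root (p := ∑ j : Fin d, (γ ^ u) ^ (j : ℕ) • M j)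
        ((mem_filter.1 hw).2 ▸ hγ.isRoot_X_pow_sub_C_pow_mod w), hmod, eval_zero]
  · calc _ ≤ univ.sup fun j : Fin d => ((γ ^ u) ^ (j : ℕ) • M j).degree := degree_sum_le _ _
      _ < ↑(a * nℓ + d) := (Finset.sup_lt_iff (WithBot.bot_lt_coe _)).2 fun j _ =>
          (degree_smul_le _ _).trans_lt (hdeg j)
      _ ≤ #(Z ∪ G) := by exact_mod_cast (by omega)

theorem eq_zero_of_le_card_commonZeroNodes {a : ℕ} (hγ : IsPrimitiveRoot γ (ν * nℓ))
    (hdn : d ≤ nℓ)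
    (hsym : ∀ i < ν, IsSymmetricColumns fun j => M j %ₘ (X ^ nℓ - C (γ ^ (i * nℓ))))
    (hdeg : ∀ j, (M j).degree < ↑(a * nℓ + d))
    (hcap : ∀ j : Fin d, p ≤ j → (M j).degree < ↑(a * nℓ + p))
    (hZ : a * nℓ + p ≤ #(commonZeroNodes γ (ν * nℓ) M)) : M = 0 := by
  set Z := commonZeroNodes γ (ν * nℓ) M
  have hZn : Z ⊆ range (ν * nℓ) := commonZeroNodes_subset_range
  have hvan : ∀ j, ∀ u ∈ Z, (M j).eval (γ ^ u) = 0 := fun j u hu =>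
    (mem_commonZeroNodes.1 hu).2 j
  by_cases hbig : a * nℓ + d ≤ #Z
  · exact funext fun j =>
      hγ.eq_zero_of_degree_lt_card hZn (hvan j) ((hdeg j).trans_le (by exact_mod_cast hbig))
  have hhigh : ∀ j : Fin d, p ≤ j → M j = 0 := fun j hj =>
    hγ.eq_zero_of_degree_lt_card hZn (hvan j) ((hcap j hj).trans_le (by exact_mod_cast hZ))
  have hW := le_card_filter_card_filter_mod_lt hZn
    (fun i hi => subset_commonZeroNodes_of_le_card hγ (hsym i hi) hhigh) hZ
    (by rw [add_one_mul]; omega)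
  funext j
  ext t
  have hc := eq_zero_of_sum_mul_pow_eq_zero (c := fun j => (M j).coeff t)
    (fun j hj => by simp [hhigh j hj])
    (hγ.injOn_pow.mono (coe_subset.2 ((filter_subset _ _).trans hZn))) hW fun u hu => by
      obtain ⟨huZ, hsmall⟩ := mem_filter.1 hu
      simpa [finsetSum_coeff, mul_comm] using
        congrArg (coeff · t) (sum_pow_smul_eq_zero_of_card_lt hγ hdn hsym hdeg hZ huZ hsmall)
  simpa using congrFun hc j

end

end

theorem mbr_locality_min_distance_general
    (F : Type*) [Field F] (ν nℓ r d a p : ℕ)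
    (hp : 1 ≤ p) (hpr : p ≤ r) (hrd : r ≤ d) (hd : d ≤ nℓ - 1)
    (γ : F) (hγ : IsPrimitiveRoot γ (ν * nℓ))
    (M : Fin d → F[X]) (hMdeg : ∀ j : Fin d, (M j).degree < ((ν * nℓ : ℕ) : WithBot ℕ))
    (m : Fin ν → Fin d → F[X])
    (hm : ∀ (i : Fin ν) (j : Fin d),
      m i j = (M j) %ₘ (X ^ nℓ - Polynomial.C (γ ^ ((i : ℕ) * nℓ))))
    -- (C1)
    (hC1 : ∀ (i : Fin ν) (j : Fin d) (t : ℕ), d ≤ t → (m i j).coeff t = 0)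
    -- (C2)
    (hC2 : ∀ (i : Fin ν) (t j : Fin d),
      (m i j).coeff (t : ℕ) = (m i t).coeff (j : ℕ))
    -- (C4)
    (hC4a : ∀ j : Fin d, (j : ℕ) ≤ p - 1 →
      (M j).degree ≤ ((a * nℓ + d - 1 : ℕ) : WithBot ℕ))
    (hC4b : ∀ j : Fin d, p ≤ (j : ℕ) →
      (M j).degree ≤ ((a * nℓ + p - 1 : ℕ) : WithBot ℕ))
    (hnz : ∃ j : Fin d, M j ≠ 0) :
    ν * nℓ - (a * nℓ + p) + 1
      ≤ {u : ℕ | u < ν * nℓ ∧ ∃ j : Fin d, (M j).eval (γ ^ u) ≠ 0}.ncard := by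
  obtain ⟨j₀, hj₀⟩ := hnz
  have hsym : ∀ i < ν, IsSymmetricColumns fun j => M j %ₘ (X ^ nℓ - C (γ ^ (i * nℓ))) :=
    fun i hi => ⟨fun j t ht => hm ⟨i, hi⟩ j ▸ hC1 ⟨i, hi⟩ j t ht,
      fun t j => hm ⟨i, hi⟩ j ▸ hm ⟨i, hi⟩ t ▸ hC2 ⟨i, hi⟩ t j⟩
  have hdeg : ∀ j, (M j).degree < ↑(a * nℓ + d) := fun j => by
    by_cases hj : (j : ℕ) ≤ p - 1
    · exact (hC4a j hj).trans_lt (by exact_mod_cast (by omega))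
    · exact (hC4b j (by omega)).trans_lt (by exact_mod_cast (by omega))
  have hcap : ∀ j : Fin d, p ≤ j → (M j).degree < ↑(a * nℓ + p) := fun j hj =>
    (hC4b j hj).trans_lt (by exact_mod_cast (by omega))
  have hlt : #(commonZeroNodes γ (ν * nℓ) M) < a * nℓ + p := by
    by_contra! h
    exact hj₀ (congrFun (eq_zero_of_le_card_commonZeroNodes hγ (by omega) hsym hdeg hcap h) j₀)
  have hltn : #(commonZeroNodes γ (ν * nℓ) M) < ν * nℓ := by
    by_contra! h
    exact hj₀ (hγ.eq_zero_of_degree_lt_card commonZeroNodes_subset_range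
      (fun u hu => (mem_commonZeroNodes.1 hu).2 j₀) ((hMdeg j₀).trans_le (by exact_mod_cast h)))
  rw [ncard_setOf_exists_eval_ne_zero]
  omega

/-- Minimum-distance optimality of the code with MBR all-symbol locality built
from Product-Matrix MBR local codes and Tamo-Barg-style polynomial lifting:
if the column polynomials `M_0, …, M_{d−1}` satisfy the symmetry/support
conditions (C1)–(C3) of the PM-MBR message matrices in each local group and
the global degree caps (C4), and are not all zero, then the vector codeword
`u ↦ (M_0(γ^u), …, M_{d−1}(γ^u))` is nonzero at at least
`n − (a·n_ℓ + p) + 1` of the `n` nodes. -/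
theorem mbr_locality_min_distance
    (F : Type*) [Field F] (ν nℓ r d a p : ℕ)
    (hν : 1 ≤ ν) (hnℓ : 2 ≤ nℓ)
    (hp : 1 ≤ p) (hpr : p ≤ r) (hrd : r ≤ d) (hd : d ≤ nℓ - 1)
    (ha : a ≤ ν - 1)
    (γ : F) (hγ : IsPrimitiveRoot γ (ν * nℓ))
    (M : Fin d → F[X]) (hMdeg : ∀ j : Fin d, (M j).degree < ((ν * nℓ : ℕ) : WithBot ℕ))
    (m : Fin ν → Fin d → F[X])
    (hm : ∀ (i : Fin ν) (j : Fin d),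
      m i j = (M j) %ₘ (X ^ nℓ - Polynomial.C (γ ^ ((i : ℕ) * nℓ))))
    -- (C1)
    (hC1 : ∀ (i : Fin ν) (j : Fin d) (t : ℕ), d ≤ t → (m i j).coeff t = 0)
    -- (C2)
    (hC2 : ∀ (i : Fin ν) (t j : Fin d),
      (m i j).coeff (t : ℕ) = (m i t).coeff (j : ℕ))
    -- (C3)
    (hC3 : ∀ (i : Fin ν) (j : Fin d) (t : ℕ),
      r ≤ t → t ≤ d - 1 → r ≤ (j : ℕ) → (m i j).coeff t = 0)
    -- (C4)
    (hC4a : ∀ j : Fin d, (j : ℕ) ≤ p - 1 →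
      (M j).degree ≤ ((a * nℓ + d - 1 : ℕ) : WithBot ℕ))
    (hC4b : ∀ j : Fin d, p ≤ (j : ℕ) →
      (M j).degree ≤ ((a * nℓ + p - 1 : ℕ) : WithBot ℕ))
    (hnz : ∃ j : Fin d, M j ≠ 0) :
    ν * nℓ - (a * nℓ + p) + 1
      ≤ {u : ℕ | u < ν * nℓ ∧ ∃ j : Fin d, (M j).eval (γ ^ u) ≠ 0}.ncard :=
  mbr_locality_min_distance_general F ν nℓ r d a p hp hpr hrd hd γ hγ M hMdeg m hm hC1 hC2 hC4a hC4b
    hnz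
end

section
/- Let F be a field, let n = ν·n_ℓ with ν ≥ 1 and n_ℓ ≥ 2, let γ ∈ F be a primitive n-th root of unity, and let integers r, d, a, p satisfy 1 ≤ p ≤ r ≤ d ≤ n_ℓ − 1 and 0 ≤ a ≤ ν − 1. For i ∈ {0, …, ν−1} let f_i(X) = X^{n_ℓ} − γ^{i·n_ℓ}. Consider the set W of tuples (M₀, M₁, …, M_{d−1}) of polynomials in F[X], each of degree less than n, such that, writing m_{i,j} = M_j mod f_i: (C1) for all i, j, the coefficient of X^t in m_{i,j} is zero for all t ≥ d; (C2) for all i and all t, j ∈ {0,…,d−1}, the coefficient of X^t in m_{i,j} equals the coefficient of X^j in m_{i,t}; (C3) for all i and all t, j with r ≤ t ≤ d−1 and r ≤ j ≤ d−1, the coefficient of X^t in m_{i,j} is zero; (C4) deg M_j ≤ a·n_ℓ + d − 1 for 0 ≤ j ≤ p−1, and deg M_j ≤ a·n_ℓ + p − 1 for p ≤ j ≤ d−1. Then W is an F-subspace of the d-fold product of F[X], and its dimension over F equals a·(rd − r(r−1)/2) + (pd − p(p−1)/2). -/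
/-!
Split each `M_j` into blocks of `nℓ` coefficients, `M_j = ∑_s X^(s nℓ) ∑_t A_s[t, j] X^t`. Since
`X^nℓ ≡ ζ^i` modulo `f_i`, where `ζ = γ^nℓ` is a primitive `ν`-th root of unity, the residue
`m_{i,j}` has coefficients `∑_s ζ^(i s) A_s[t, j]`: an invertible Vandermonde transform of the
blocks. Hence (C1)–(C3), imposed for all `i`, say exactly that every `A_s` is a symmetric `d × d`
matrix vanishing on `[r, d)²`, while (C4) forces `A_s = 0` for `s > a` and shrinks the vanishing
corner of `A_a` to `[p, d)²`. Each such space of symmetric matrices vanishing on `[c, d)²` is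
parametrised by the entries on or above the diagonal in its first `c` rows, so its dimension is
`c d - c (c - 1) / 2`.
-/

open Polynomial Finset

theorem Nat.mul_add_div_mod {n s t : ℕ} (ht : t < n) :
    (s * n + t) / n = s ∧ (s * n + t) % n = t :=
  (Nat.div_mod_unique (by omega)).2 ⟨by ring, ht⟩

section BlockPoly

variable {R : Type*} [CommRing R] {ν m n : ℕ}

noncomputable def blockPoly (n : ℕ) (B : Fin ν → Fin m → R) : R[X] :=
  ∑ s : Fin ν, ∑ t : Fin m, monomial (s * n + t) (B s t)

theorem coeff_blockPoly_eq_zero {B : Fin ν → Fin m → R} {k : ℕ}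
    (h : ∀ (s : Fin ν) (t : Fin m), s * n + t = k → B s t = 0) :
    (blockPoly n B).coeff k = 0 := by
  simp only [blockPoly, finsetSum_coeff, coeff_monomial]
  exact sum_eq_zero fun s _ => sum_eq_zero fun t _ => ite_eq_right_iff.2 (h s t)

theorem coeff_blockPoly (hmn : m ≤ n) (B : Fin ν → Fin m → R) (s : Fin ν) (t : Fin m) :
    (blockPoly n B).coeff (s * n + t) = B s t := by
  have hinj {s' : Fin ν} {t' : Fin m} (h : (s' : ℕ) * n + t' = s * n + t) : s' = s ∧ t' = t := by
    have h' := Nat.mul_add_div_mod (s := s') (t'.2.trans_le hmn)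
    rw [h, (Nat.mul_add_div_mod (t.2.trans_le hmn)).1,
      (Nat.mul_add_div_mod (t.2.trans_le hmn)).2] at h'
    exact ⟨Fin.ext h'.1.symm, Fin.ext h'.2.symm⟩
  simp only [blockPoly, finsetSum_coeff, coeff_monomial]
  rw [Fintype.sum_eq_single s, Fintype.sum_eq_single t, if_pos rfl]
  · exact fun t' ht' => if_neg fun h => ht' (hinj h).2
  · exact fun s' hs' => sum_eq_zero fun t' _ => if_neg fun h => hs' (hinj h).1

theorem degree_blockPoly_le {B : Fin ν → Fin m → R} {D : ℕ}
    (h : ∀ (s : Fin ν) (t : Fin m), B s t ≠ 0 → s * n + t ≤ D) :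
    (blockPoly n B).degree ≤ D :=
  (degree_le_iff_coeff_zero _ _).2 fun k hk => coeff_blockPoly_eq_zero fun s t hst =>
    not_ne_iff.1 fun hB => (h s t hB).not_gt (by rw [hst]; exact_mod_cast hk)

theorem degree_blockPoly_lt (hmn : m ≤ n) (B : Fin ν → Fin m → R) :
    (blockPoly n B).degree < ↑(ν * n) :=
  (degree_lt_iff_coeff_zero _ _).2 fun k hk => coeff_blockPoly_eq_zero fun s t hst => by
    have : ((s : ℕ) + 1) * n ≤ ν * n := Nat.mul_le_mul_right _ s.2
    nlinarith [t.2]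

theorem eq_blockPoly_of_degree_lt (hmn : m ≤ n) {M : R[X]} (hM : M.degree < ↑(ν * n))
    (h : ∀ (s : Fin ν) (t : ℕ), m ≤ t → t < n → M.coeff (s * n + t) = 0) :
    M = blockPoly n (fun (s : Fin ν) (t : Fin m) => M.coeff (s * n + t)) := by
  ext k
  by_cases hk : ∃ (s : Fin ν) (t : Fin m), (s : ℕ) * n + t = k
  · obtain ⟨s, t, rfl⟩ := hk
    rw [coeff_blockPoly hmn]
  push Not at hk
  rw [coeff_blockPoly_eq_zero fun s t hst => (hk s t hst).elim]
  by_cases hkν : k < ν * n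
  · have hn : 0 < n := Nat.pos_of_ne_zero (by rintro rfl; simp at hkν)
    have hkn : k / n < ν := (Nat.div_lt_iff_lt_mul hn).2 hkν
    have hk' : k / n * n + k % n = k := Nat.div_add_mod' k n
    have hmk : m ≤ k % n := not_lt.1 fun hlt => hk ⟨k / n, hkn⟩ ⟨k % n, hlt⟩ hk'
    simpa [hk'] using h ⟨k / n, hkn⟩ (k % n) hmk (Nat.mod_lt k hn)
  · exact coeff_eq_zero_of_degree_lt (hM.trans_le (by exact_mod_cast not_lt.1 hkν))

variable [Nontrivial R]

theorem blockPoly_modByMonic (hmn : m ≤ n) (B : Fin ν → Fin m → R) (θ : R) :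
    blockPoly n B %ₘ (X ^ n - C θ)
      = ∑ s : Fin ν, ∑ t : Fin m, monomial t (θ ^ (s : ℕ) * B s t) := by
  rcases Nat.eq_zero_or_pos n with rfl | hn
  · obtain rfl := Nat.le_zero.1 hmn
    simp [blockPoly]
  have hmonic := monic_X_pow_sub_C θ hn.ne'
  rw [modByMonic_eq_of_dvd_sub hmonic, (modByMonic_eq_self_iff hmonic).2]
  · rw [degree_X_pow_sub_C hn, degree_lt_iff_coeff_zero]
    intro k hk
    simp only [finsetSum_coeff, coeff_monomial]
    exact sum_eq_zero fun s _ => sum_eq_zero fun t _ => if_neg (by omega)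
  · simp only [blockPoly, ← sum_sub_distrib]
    refine dvd_sum fun s _ => dvd_sum fun t _ => ?_
    have : monomial (s * n + t) (B s t) - monomial t (θ ^ (s : ℕ) * B s t)
        = ((X ^ n) ^ (s : ℕ) - C θ ^ (s : ℕ)) * monomial t (B s t) := by
      simp only [← C_mul_X_pow_eq_monomial, map_mul, map_pow, pow_add, ← pow_mul, mul_comm n]
      ring
    exact this ▸ (sub_dvd_pow_sub_pow _ _ _).mul_right _

theorem coeff_blockPoly_modByMonic (hmn : m ≤ n) (B : Fin ν → Fin m → R) (θ : R) (t : Fin m) :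
    (blockPoly n B %ₘ (X ^ n - C θ)).coeff t = ∑ s : Fin ν, θ ^ (s : ℕ) * B s t := by
  simp [blockPoly_modByMonic hmn, finsetSum_coeff, coeff_monomial, Fin.val_inj]

theorem coeff_blockPoly_modByMonic_of_le (hmn : m ≤ n) (B : Fin ν → Fin m → R) (θ : R) {k : ℕ}
    (hk : m ≤ k) : (blockPoly n B %ₘ (X ^ n - C θ)).coeff k = 0 := by
  simp only [blockPoly_modByMonic hmn, finsetSum_coeff, coeff_monomial]
  exact sum_eq_zero fun s _ => sum_eq_zero fun t _ => if_neg (by omega)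

theorem coeff_modByMonic_X_pow_sub_C {M : R[X]} (hM : M.degree < ↑(ν * n)) (θ : R) {t : ℕ}
    (ht : t < n) :
    (M %ₘ (X ^ n - C θ)).coeff t = ∑ s : Fin ν, θ ^ (s : ℕ) * M.coeff (s * n + t) := by
  conv_lhs => rw [eq_blockPoly_of_degree_lt le_rfl hM fun _ _ h h' => absurd h' (not_lt.2 h)]
  exact coeff_blockPoly_modByMonic le_rfl _ θ ⟨t, ht⟩

end BlockPoly

section Vandermonde

variable {R : Type*} [CommRing R] [IsDomain R] {ν : ℕ}

theorem IsPrimitiveRoot.eq_of_forall_sum_pow_mul_eq {ζ : R} (hζ : IsPrimitiveRoot ζ ν)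
    {v w : Fin ν → R}
    (h : ∀ i : Fin ν, ∑ s : Fin ν, (ζ ^ (i : ℕ)) ^ (s : ℕ) * v s
      = ∑ s : Fin ν, (ζ ^ (i : ℕ)) ^ (s : ℕ) * w s) : v = w := by
  have hinj : Function.Injective fun i : Fin ν => ζ ^ (i : ℕ) :=
    fun i j hij => Fin.ext (hζ.pow_inj i.2 j.2 hij)
  refine sub_eq_zero.1 (Matrix.eq_zero_of_mulVec_eq_zero
    (Matrix.det_vandermonde_ne_zero_iff.2 hinj) ?_)
  ext i
  simpa [Matrix.mulVec, dotProduct, mul_sub, sum_sub_distrib, sub_eq_zero] using h i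

theorem coeff_eq_of_forall_coeff_modByMonic_eq {n : ℕ} {γ : R} (hγ : IsPrimitiveRoot γ (ν * n))
    {M N : R[X]} (hM : M.degree < ↑(ν * n)) (hN : N.degree < ↑(ν * n)) {t u : ℕ}
    (ht : t < n) (hu : u < n)
    (h : ∀ i : Fin ν, (M %ₘ (X ^ n - C (γ ^ ((i : ℕ) * n)))).coeff t
      = (N %ₘ (X ^ n - C (γ ^ ((i : ℕ) * n)))).coeff u)
    (s : Fin ν) : M.coeff (s * n + t) = N.coeff (s * n + u) := by
  have hζ : IsPrimitiveRoot (γ ^ n) ν := hγ.pow (Nat.mul_pos s.pos (by omega)) (mul_comm _ _)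
  refine congrFun (hζ.eq_of_forall_sum_pow_mul_eq (v := fun s : Fin ν => M.coeff (s * n + t))
    (w := fun s : Fin ν => N.coeff (s * n + u)) fun i => ?_) s
  simpa only [coeff_modByMonic_X_pow_sub_C hM _ ht, coeff_modByMonic_X_pow_sub_C hN _ hu,
    ← pow_mul'] using h i

end Vandermonde

section MessageSpace

variable (R : Type*) [CommRing R] (d c : ℕ)

def mbrMessageSpace : Submodule R (Matrix (Fin d) (Fin d) R) where
  carrier := {A | A.IsSymm ∧ ∀ t j : Fin d, c ≤ (t : ℕ) → c ≤ (j : ℕ) → A t j = 0}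
  add_mem' := fun ⟨hA, hA0⟩ ⟨hB, hB0⟩ =>
    ⟨hA.add hB, fun t j ht hj => by simp [hA0 t j ht hj, hB0 t j ht hj]⟩
  zero_mem' := ⟨Matrix.isSymm_zero, fun _ _ _ _ => rfl⟩
  smul_mem' := fun a _ ⟨hA, hA0⟩ => ⟨hA.smul a, fun t j ht hj => by simp [hA0 t j ht hj]⟩

def mbrMessageSpaceEquiv :
    mbrMessageSpace R d c ≃ₗ[R] ({x : Fin d × Fin d // x.1 ≤ x.2 ∧ (x.1 : ℕ) < c} → R) where
  toFun A x := A.1 x.1.1 x.1.2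
  map_add' _ _ := rfl
  map_smul' _ _ := rfl
  invFun f := ⟨fun t j => if h : ((min t j : Fin d) : ℕ) < c
      then f ⟨(min t j, max t j), min_le_max, h⟩ else 0,
    Matrix.IsSymm.ext fun t j => by simp only [min_comm, max_comm],
    fun t j ht hj => dif_neg (by rw [Fin.coe_min]; omega)⟩
  left_inv A := by
    obtain ⟨A, hA⟩ := A
    ext t j
    dsimp only
    split_ifs with h
    · rcases le_total t j with htj | hjt
      · simp only [min_eq_left htj, max_eq_right htj]
      · simp only [min_eq_right hjt, max_eq_left hjt, hA.1.apply]
    · rw [Fin.coe_min] at h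
      exact (hA.2 t j (by omega) (by omega)).symm
  right_inv f := by
    ext ⟨⟨t, j⟩, htj, htc⟩
    simp [htj, htc]

theorem card_subtype_fst_le_snd_and_fst_lt (hcd : c ≤ d) :
    Fintype.card {x : Fin d × Fin d // x.1 ≤ x.2 ∧ (x.1 : ℕ) < c} = c * d - c * (c - 1) / 2 := by
  rw [Fintype.card_congr
      (Equiv.subtypeProdEquivSigmaSubtype fun t j : Fin d => t ≤ j ∧ (t : ℕ) < c),
    Fintype.card_sigma]
  have hrow (t : Fin d) :
      Fintype.card {j // t ≤ j ∧ (t : ℕ) < c} = if (t : ℕ) < c then d - t else 0 := by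
    split_ifs with h <;> simp [h, Fintype.card_subtype, ← Fin.card_Ici, filter_le_eq_Ici]
  have hrange : (range d).filter (· < c) = range c := by
    ext x
    simp only [mem_filter, mem_range]
    omega
  rw [Fintype.sum_congr _ _ hrow, Fin.sum_univ_eq_sum_range (fun t => if t < c then d - t else 0),
    ← sum_filter, hrange, sum_tsub_distrib _ fun t ht => (mem_range.1 ht).le.trans hcd, sum_const,
    card_range, smul_eq_mul, sum_range_id]

theorem finrank_mbrMessageSpace [Nontrivial R] (hcd : c ≤ d) :
    Module.finrank R (mbrMessageSpace R d c) = c * d - c * (c - 1) / 2 := by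
  rw [(mbrMessageSpaceEquiv R d c).finrank_eq, Module.finrank_fintype_fun_eq_card,
    card_subtype_fst_le_snd_and_fst_lt d c hcd]

end MessageSpace

section Lifting

variable {F : Type*} [Field F] {ν n d : ℕ}

noncomputable def liftMessages (n : ℕ) :
    (Fin ν → Matrix (Fin d) (Fin d) F) →ₗ[F] (Fin d → F[X]) where
  toFun A j := blockPoly n fun s t => A s t j
  map_add' A B := by ext j : 1; simp [blockPoly, sum_add_distrib]
  map_smul' a A := by ext j : 1; simp [blockPoly, smul_sum, smul_monomial]

theorem liftMessages_injective (hdn : d ≤ n) :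
    Function.Injective (liftMessages (F := F) (ν := ν) (d := d) n) := by
  intro A B h
  ext s t j
  simpa [liftMessages, coeff_blockPoly hdn] using congrArg (fun M => (M j).coeff (s * n + t)) h

/-- (C4) leaves the `s`-th message matrix `r` free rows below layer `a`, `p` at layer `a`, and none
above. -/
def layerRank (r a p s : ℕ) : ℕ :=
  if s < a then r else if s = a then p else 0

theorem lt_layerRank_iff {r a p s x : ℕ} :
    x < layerRank r a p s ↔ s < a ∧ x < r ∨ s = a ∧ x < p := by
  unfold layerRank
  split_ifs <;> omega

theorem sum_layerRank {a : ℕ} (ha : a < ν) (r p : ℕ) {g : ℕ → ℕ} (hg : g 0 = 0) :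
    ∑ s : Fin ν, g (layerRank r a p s) = a * g r + g p := by
  have hbelow : ∀ s ∈ range a, g (layerRank r a p s) = g r := fun s hs => by
    simp [layerRank, mem_range.1 hs]
  have habove : ∀ s ∈ Ico (a + 1) ν, g (layerRank r a p s) = 0 := fun s hs => by
    have := (mem_Ico.1 hs).1
    simp [layerRank, show ¬s < a by omega, show s ≠ a by omega, hg]
  rw [Fin.sum_univ_eq_sum_range (fun s => g (layerRank r a p s)), ← sum_range_add_sum_Ico _ ha,
    sum_range_succ, sum_congr rfl hbelow, sum_eq_zero habove]
  simp [layerRank]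

variable (F ν n d) in
noncomputable def liftedMessageSpace (r a p : ℕ) : Submodule F (Fin d → F[X]) :=
  LinearMap.range (liftMessages n ∘ₗ LinearMap.pi fun s : Fin ν =>
    (mbrMessageSpace F d (layerRank r a p s)).subtype ∘ₗ LinearMap.proj s)

theorem mem_liftedMessageSpace {r a p : ℕ} {M : Fin d → F[X]} :
    M ∈ liftedMessageSpace F ν n d r a p ↔
      ∃ A : Fin ν → Matrix (Fin d) (Fin d) F,
        (∀ s : Fin ν, A s ∈ mbrMessageSpace F d (layerRank r a p s)) ∧ liftMessages n A = M :=
  ⟨fun ⟨A, hA⟩ => ⟨fun s => A s, fun s => (A s).2, hA⟩,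
    fun ⟨A, hA, hAM⟩ => ⟨fun s => ⟨A s, hA s⟩, hAM⟩⟩

theorem finrank_liftedMessageSpace {r a p : ℕ} (hdn : d ≤ n) (hpr : p ≤ r) (hrd : r ≤ d)
    (haν : a < ν) :
    Module.finrank F (liftedMessageSpace F ν n d r a p)
      = a * (r * d - r * (r - 1) / 2) + (p * d - p * (p - 1) / 2) := by
  rw [liftedMessageSpace, LinearMap.finrank_range_of_inj, Module.finrank_pi_fintype,
    sum_congr rfl fun s _ => finrank_mbrMessageSpace F d _ ?_,
    sum_layerRank haν r p (g := fun c => c * d - c * (c - 1) / 2) (by simp)]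
  · unfold layerRank; split_ifs <;> omega
  · exact (liftMessages_injective hdn).comp fun A B h => funext fun s => Subtype.ext (congrFun h s)

end Lifting

section Code

variable {F : Type*} [Field F]

variable (F) in
def mbrCodeSet (ν nℓ r d a p : ℕ) (γ : F) : Set (Fin d → F[X]) :=
  {M : Fin d → F[X] |
    (∀ j : Fin d, (M j).degree < ((ν * nℓ : ℕ) : WithBot ℕ)) ∧
    (∀ (i : Fin ν) (j : Fin d) (t : ℕ), d ≤ t →
      ((M j) %ₘ (X ^ nℓ - Polynomial.C (γ ^ ((i : ℕ) * nℓ)))).coeff t = 0) ∧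
    (∀ (i : Fin ν) (t j : Fin d),
      ((M j) %ₘ (X ^ nℓ - Polynomial.C (γ ^ ((i : ℕ) * nℓ)))).coeff (t : ℕ)
        = ((M t) %ₘ (X ^ nℓ - Polynomial.C (γ ^ ((i : ℕ) * nℓ)))).coeff (j : ℕ)) ∧
    (∀ (i : Fin ν) (j : Fin d) (t : ℕ),
      r ≤ t → t ≤ d - 1 → r ≤ (j : ℕ) →
      ((M j) %ₘ (X ^ nℓ - Polynomial.C (γ ^ ((i : ℕ) * nℓ)))).coeff t = 0) ∧
    (∀ j : Fin d, (j : ℕ) ≤ p - 1 →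
      (M j).degree ≤ ((a * nℓ + d - 1 : ℕ) : WithBot ℕ)) ∧
    (∀ j : Fin d, p ≤ (j : ℕ) →
      (M j).degree ≤ ((a * nℓ + p - 1 : ℕ) : WithBot ℕ))}

variable {ν n r d a p : ℕ}

theorem liftMessages_mem_mbrCodeSet (hdn : d ≤ n) (hpr : p ≤ r) (γ : F)
    {A : Fin ν → Matrix (Fin d) (Fin d) F}
    (hA : ∀ s : Fin ν, A s ∈ mbrMessageSpace F d (layerRank r a p s)) :
    liftMessages n A ∈ mbrCodeSet F ν n r d a p γ := by
  have hsupp {s : Fin ν} {t j : Fin d} (h : A s t j ≠ 0) :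
      (s < a ∧ t < r ∨ s = a ∧ t < p) ∨ (s < a ∧ j < r ∨ s = a ∧ j < p) := by
    simp only [← lt_layerRank_iff]
    by_contra! hc
    exact h ((hA s).2 t j hc.1 hc.2)
  refine ⟨fun j => degree_blockPoly_lt hdn _, fun i j t ht => ?_, fun i t j => ?_,
    fun i j t hrt htd hrj => ?_, fun j _ => ?_, fun j hpj => ?_⟩
  · exact coeff_blockPoly_modByMonic_of_le hdn _ _ ht
  · simp only [liftMessages, LinearMap.coe_mk, AddHom.coe_mk, coeff_blockPoly_modByMonic hdn,
      (hA _).1.apply]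
  · rw [show t = ((⟨t, by omega⟩ : Fin d) : ℕ) from rfl]
    refine (coeff_blockPoly_modByMonic hdn _ _ _).trans (sum_eq_zero fun s _ => ?_)
    by_contra hne
    have := hsupp (right_ne_zero_of_mul hne)
    dsimp only at this
    omega
  · refine degree_blockPoly_le fun s t hne => ?_
    have := hsupp hne
    have : (s : ℕ) ≤ a → s * n ≤ a * n := fun h => Nat.mul_le_mul_right n h
    omega
  · refine degree_blockPoly_le fun s t hne => ?_
    have := hsupp hne
    have : (s : ℕ) < a → s * n + n ≤ a * n := fun h => by
      simpa [Nat.succ_mul] using Nat.mul_le_mul_right n h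
    have : (s : ℕ) = a → s * n = a * n := fun h => by rw [h]
    have := t.2
    omega

theorem exists_liftMessages_eq_of_mem_mbrCodeSet {γ : F} (hγ : IsPrimitiveRoot γ (ν * n))
    (hdn : d ≤ n) (hp : 1 ≤ p) {M : Fin d → F[X]}
    (hM : M ∈ mbrCodeSet F ν n r d a p γ) :
    ∃ A : Fin ν → Matrix (Fin d) (Fin d) F,
      (∀ s : Fin ν, A s ∈ mbrMessageSpace F d (layerRank r a p s)) ∧ liftMessages n A = M := by
  obtain ⟨hdeg, hC1, hC2, hC3, hC4, hC4'⟩ := hM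
  have hvanish {j : Fin d} {t : ℕ} (ht : t < n)
      (h : ∀ i : Fin ν, (M j %ₘ (X ^ n - C (γ ^ ((i : ℕ) * n)))).coeff t = 0) (s : Fin ν) :
      (M j).coeff (s * n + t) = 0 := by
    simpa using coeff_eq_of_forall_coeff_modByMonic_eq hγ (hdeg j) (N := 0)
      (by rw [degree_zero]; exact WithBot.bot_lt_coe _) ht ht
      (by simpa using h) s
  have hdeg' (j : Fin d) : (M j).degree ≤ ↑(a * n + d - 1) := by
    by_cases hj : (j : ℕ) < p
    · exact hC4 j (by omega)
    · exact (hC4' j (by omega)).trans (by exact_mod_cast (by omega))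
  refine ⟨fun s t j => (M j).coeff (s * n + t), fun s => ⟨?_, fun t j ht hj => ?_⟩, ?_⟩
  · exact Matrix.IsSymm.ext fun t j => (coeff_eq_of_forall_coeff_modByMonic_eq hγ (hdeg t) (hdeg j)
      (j.2.trans_le hdn) (t.2.trans_le hdn) (fun i => hC2 i j t) s)
  · dsimp only
    rw [← not_lt, lt_layerRank_iff] at ht hj
    rcases lt_trichotomy (s : ℕ) a with hsa | hsa | hsa
    · exact hvanish (t.2.trans_le hdn) (fun i => hC3 i j t (by omega) (by omega) (by omega)) s
    · refine coeff_eq_zero_of_degree_lt ((hC4' j (by omega)).trans_lt ?_)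
      rw [hsa]
      exact_mod_cast (by omega)
    · refine coeff_eq_zero_of_degree_lt ((hdeg' j).trans_lt ?_)
      have : a * n + n ≤ s * n := by simpa [Nat.succ_mul] using Nat.mul_le_mul_right n hsa
      exact_mod_cast (by omega)
  · ext j : 1
    exact (eq_blockPoly_of_degree_lt hdn (hdeg j)
      fun s t hdt htn => hvanish htn (fun i => hC1 i j t hdt) s).symm

theorem coe_liftedMessageSpace {γ : F} (hγ : IsPrimitiveRoot γ (ν * n)) (hdn : d ≤ n)
    (hp : 1 ≤ p) (hpr : p ≤ r) :
    (liftedMessageSpace F ν n d r a p : Set (Fin d → F[X])) = mbrCodeSet F ν n r d a p γ := by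
  ext M
  rw [SetLike.mem_coe, mem_liftedMessageSpace]
  constructor
  · rintro ⟨A, hA, rfl⟩
    exact liftMessages_mem_mbrCodeSet hdn hpr γ hA
  · exact exists_liftMessages_eq_of_mem_mbrCodeSet hγ hdn hp

end Code

theorem mbr_locality_dimension_general
    (F : Type*) [Field F] (ν nℓ r d a p : ℕ)
    (hν : 1 ≤ ν)
    (hp : 1 ≤ p) (hpr : p ≤ r) (hrd : r ≤ d) (hd : d ≤ nℓ - 1)
    (ha : a ≤ ν - 1)
    (γ : F) (hγ : IsPrimitiveRoot γ (ν * nℓ)) :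
    ∃ S : Submodule F (Fin d → F[X]),
      (S : Set (Fin d → F[X]))
        = {M : Fin d → F[X] |
            (∀ j : Fin d, (M j).degree < ((ν * nℓ : ℕ) : WithBot ℕ)) ∧
            -- (C1)
            (∀ (i : Fin ν) (j : Fin d) (t : ℕ), d ≤ t →
              ((M j) %ₘ (X ^ nℓ - Polynomial.C (γ ^ ((i : ℕ) * nℓ)))).coeff t = 0) ∧
            -- (C2)
            (∀ (i : Fin ν) (t j : Fin d),
              ((M j) %ₘ (X ^ nℓ - Polynomial.C (γ ^ ((i : ℕ) * nℓ)))).coeff (t : ℕ)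
                = ((M t) %ₘ (X ^ nℓ - Polynomial.C (γ ^ ((i : ℕ) * nℓ)))).coeff (j : ℕ)) ∧
            -- (C3)
            (∀ (i : Fin ν) (j : Fin d) (t : ℕ),
              r ≤ t → t ≤ d - 1 → r ≤ (j : ℕ) →
              ((M j) %ₘ (X ^ nℓ - Polynomial.C (γ ^ ((i : ℕ) * nℓ)))).coeff t = 0) ∧
            -- (C4)
            (∀ j : Fin d, (j : ℕ) ≤ p - 1 →
              (M j).degree ≤ ((a * nℓ + d - 1 : ℕ) : WithBot ℕ)) ∧
            (∀ j : Fin d, p ≤ (j : ℕ) →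
              (M j).degree ≤ ((a * nℓ + p - 1 : ℕ) : WithBot ℕ))} ∧
      Module.finrank F S
        = a * (r * d - r * (r - 1) / 2) + (p * d - p * (p - 1) / 2) := by
  have hdn : d ≤ nℓ := by omega
  exact ⟨liftedMessageSpace F ν nℓ d r a p, coe_liftedMessageSpace hγ hdn hp hpr,
    finrank_liftedMessageSpace hdn hpr hrd (by omega)⟩

/-- Dimension of the code with MBR all-symbol locality built from
Product-Matrix MBR local codes and Tamo-Barg-style polynomial lifting: the set
`W` of tuples of column polynomials satisfying the PM-MBR symmetry/support
conditions (C1)–(C3) in each local group and the global degree caps (C4) is an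
`F`-subspace of `F[X]^d` of dimension
`a·(rd − r(r−1)/2) + (pd − p(p−1)/2)`. -/
theorem mbr_locality_dimension
    (F : Type*) [Field F] (ν nℓ r d a p : ℕ)
    (hν : 1 ≤ ν) (hnℓ : 2 ≤ nℓ)
    (hp : 1 ≤ p) (hpr : p ≤ r) (hrd : r ≤ d) (hd : d ≤ nℓ - 1)
    (ha : a ≤ ν - 1)
    (γ : F) (hγ : IsPrimitiveRoot γ (ν * nℓ)) :
    ∃ S : Submodule F (Fin d → F[X]),
      (S : Set (Fin d → F[X]))
        = {M : Fin d → F[X] |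
            (∀ j : Fin d, (M j).degree < ((ν * nℓ : ℕ) : WithBot ℕ)) ∧
            -- (C1)
            (∀ (i : Fin ν) (j : Fin d) (t : ℕ), d ≤ t →
              ((M j) %ₘ (X ^ nℓ - Polynomial.C (γ ^ ((i : ℕ) * nℓ)))).coeff t = 0) ∧
            -- (C2)
            (∀ (i : Fin ν) (t j : Fin d),
              ((M j) %ₘ (X ^ nℓ - Polynomial.C (γ ^ ((i : ℕ) * nℓ)))).coeff (t : ℕ)
                = ((M t) %ₘ (X ^ nℓ - Polynomial.C (γ ^ ((i : ℕ) * nℓ)))).coeff (j : ℕ)) ∧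
            -- (C3)
            (∀ (i : Fin ν) (j : Fin d) (t : ℕ),
              r ≤ t → t ≤ d - 1 → r ≤ (j : ℕ) →
              ((M j) %ₘ (X ^ nℓ - Polynomial.C (γ ^ ((i : ℕ) * nℓ)))).coeff t = 0) ∧
            -- (C4)
            (∀ j : Fin d, (j : ℕ) ≤ p - 1 →
              (M j).degree ≤ ((a * nℓ + d - 1 : ℕ) : WithBot ℕ)) ∧
            (∀ j : Fin d, p ≤ (j : ℕ) →
              (M j).degree ≤ ((a * nℓ + p - 1 : ℕ) : WithBot ℕ))} ∧
      Module.finrank F S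
        = a * (r * d - r * (r - 1) / 2) + (p * d - p * (p - 1) / 2) :=
  mbr_locality_dimension_general F ν nℓ r d a p hν hp hpr hrd hd ha γ hγ
end

section
/- Let F be a field, let d ≥ 1, and let M be a symmetric d×d matrix over F. For θ ∈ F let ψ(θ) denote the row vector (1, θ, θ², …, θ^{d−1}). Let θ₁, …, θ_d be d pairwise distinct elements of F and let θ_f ∈ F. If ψ(θ_i) · M · ψ(θ_f)ᵀ = 0 for all i = 1, …, d, then ψ(θ_f) · M = 0. -/
/-! The repair symbols form the vector `V · (M ψ(θ_f)ᵀ)` with `V` the Vandermonde matrix of the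
distinct helper points, which is invertible; so `M ψ(θ_f)ᵀ = 0`, and by symmetry of `M` this column
is the transpose of the node content `ψ(θ_f) M`. -/

namespace Matrix

theorem IsSymm.vecMul_eq_mulVec {n α : Type*} [Fintype n] [CommSemiring α]
    {A : Matrix n n α} (hA : A.IsSymm) (x : n → α) : x ᵥ* A = A *ᵥ x := by
  rw [← vecMul_transpose, hA.eq]

end Matrix

theorem pm_mbr_repair_general
    (F : Type*) [Field F] (d : ℕ)
    (M : Matrix (Fin d) (Fin d) F) (hM : M.IsSymm)
    (θ : Fin d → F) (hθ : Function.Injective θ) (θf : F)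
    (h : ∀ i : Fin d,
      dotProduct (fun j : Fin d => θ i ^ (j : ℕ))
        (M.mulVec (fun j : Fin d => θf ^ (j : ℕ))) = 0) :
    Matrix.vecMul (fun j : Fin d => θf ^ (j : ℕ)) M = 0 := by
  rw [hM.vecMul_eq_mulVec]
  exact Matrix.eq_zero_of_forall_index_sum_pow_mul_eq_zero hθ h

/-- Node-repair property of the Product-Matrix MBR code: if the `d` repair
symbols `ψ(θ_i)·M·ψ(θ_f)ᵀ` sent by helper nodes at `d` pairwise distinct
evaluation points all vanish, then the content `ψ(θ_f)·M` of the failed node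
vanishes, where `M` is symmetric and `ψ(θ) = (1, θ, …, θ^{d−1})`. -/
theorem pm_mbr_repair
    (F : Type*) [Field F] (d : ℕ) (hd : 1 ≤ d)
    (M : Matrix (Fin d) (Fin d) F) (hM : M.IsSymm)
    (θ : Fin d → F) (hθ : Function.Injective θ) (θf : F)
    (h : ∀ i : Fin d,
      dotProduct (fun j : Fin d => θ i ^ (j : ℕ))
        (M.mulVec (fun j : Fin d => θf ^ (j : ℕ))) = 0) :
    Matrix.vecMul (fun j : Fin d => θf ^ (j : ℕ)) M = 0 :=
  pm_mbr_repair_general F d M hM θ hθ θf h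
end

section
/- Let F be a field, let 1 ≤ r ≤ d be integers, and let M be a symmetric d×d matrix over F (indices from 0 to d−1) such that M_{x,y} = 0 whenever both r ≤ x ≤ d−1 and r ≤ y ≤ d−1. For θ ∈ F let ψ(θ) denote the row vector (1, θ, θ², …, θ^{d−1}). If there exist r pairwise distinct elements θ₁, …, θ_r of F with ψ(θ_i) · M = 0 for all i = 1, …, r, then M = 0. -/
/-!
Reading `ψ(θ) · M = 0` column by column says that each column of `M`, taken as the coefficient
vector of a polynomial, vanishes at the `r` distinct points `θ i`. A column whose entries vanish
from index `r` on gives a polynomial of degree `< r`, which must then be zero. The zero block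
makes this apply first to the columns `y ≥ r`; by symmetry the rows `x ≥ r` then vanish, so it
applies to every column.
-/

open Polynomial

theorem Polynomial.eval_ofFn {R : Type*} [CommSemiring R] [DecidableEq R] {n : ℕ}
    (c : Fin n → R) (x : R) : (ofFn n c).eval x = (fun j : Fin n => x ^ (j : ℕ)) ⬝ᵥ c := by
  simp [ofFn_eq_sum_monomial, eval_finsetSum, dotProduct, mul_comm]

theorem Polynomial.degree_ofFn_lt_of_forall_le {R : Type*} [Semiring R] [DecidableEq R]
    {n r : ℕ} (c : Fin n → R) (hc : ∀ j : Fin n, r ≤ (j : ℕ) → c j = 0) :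
    (ofFn n c).degree < r := by
  rw [degree_lt_iff_coeff_zero]
  intro m hm
  rcases lt_or_ge m n with hmn | hmn
  · rw [ofFn_coeff_eq_val_of_lt c hmn]
    exact hc _ (by exact_mod_cast hm)
  · exact ofFn_coeff_eq_zero_of_ge c hmn

theorem eq_zero_of_powers_dotProduct_eq_zero {R ι : Type*} [CommRing R] [IsDomain R]
    [Fintype ι] {d : ℕ} (c : Fin d → R) (hc : ∀ j : Fin d, Fintype.card ι ≤ (j : ℕ) → c j = 0)
    (θ : ι → R) (hθ : Function.Injective θ)
    (h : ∀ i, (fun j : Fin d => θ i ^ (j : ℕ)) ⬝ᵥ c = 0) : c = 0 := by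
  classical
  have hp : ofFn d c = 0 :=
    eq_zero_of_degree_lt_of_eval_index_eq_zero Finset.univ hθ.injOn
      (degree_ofFn_lt_of_forall_le c hc) fun i _ => by rw [eval_ofFn, h i]
  exact injective_ofFn d (hp.trans (ofFn_zero d).symm)

theorem pm_mbr_data_collection_general
    (F : Type*) [Field F] (r d : ℕ)
    (M : Matrix (Fin d) (Fin d) F) (hM : M.IsSymm)
    (hblock : ∀ x y : Fin d, r ≤ (x : ℕ) → r ≤ (y : ℕ) → M x y = 0)
    (θ : Fin r → F) (hθ : Function.Injective θ)
    (h : ∀ i : Fin r,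
      Matrix.vecMul (fun j : Fin d => θ i ^ (j : ℕ)) M = 0) :
    M = 0 := by
  have column_eq_zero (y : Fin d) (hy : ∀ j : Fin d, r ≤ (j : ℕ) → M j y = 0) (x : Fin d) :
      M x y = 0 := by
    refine congrFun (eq_zero_of_powers_dotProduct_eq_zero (fun j => M j y) ?_ θ hθ
      fun i => congrFun (h i) y) x
    simpa using hy
  have lower_columns (x y : Fin d) (hy : r ≤ (y : ℕ)) : M x y = 0 :=
    column_eq_zero y (fun j hj => hblock j y hj hy) x
  ext x y
  exact column_eq_zero y (fun j hj => by rw [← hM.apply]; exact lower_columns y j hj) x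

/-- Data-collection property of the Product-Matrix MBR code with `k = r`: the
message matrix `M` is symmetric with zero bottom-right `(d−r)×(d−r)` block; if
the contents `ψ(θ_i)·M` of `r` nodes at pairwise distinct evaluation points
all vanish, then `M = 0`, where `ψ(θ) = (1, θ, …, θ^{d−1})`. -/
theorem pm_mbr_data_collection
    (F : Type*) [Field F] (r d : ℕ) (hr : 1 ≤ r) (hrd : r ≤ d)
    (M : Matrix (Fin d) (Fin d) F) (hM : M.IsSymm)
    (hblock : ∀ x y : Fin d, r ≤ (x : ℕ) → r ≤ (y : ℕ) → M x y = 0)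
    (θ : Fin r → F) (hθ : Function.Injective θ)
    (h : ∀ i : Fin r,
      Matrix.vecMul (fun j : Fin d => θ i ^ (j : ℕ)) M = 0) :
    M = 0 :=
  pm_mbr_data_collection_general F r d M hM hblock θ hθ h
end
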